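/- arXiv:1408.2878 — 10 statements merged into one kernel-verified Lean document; each statement's English description precedes it below -/
import Mathlib

section
/- Let G be a locally compact Hausdorff group with left Haar measure μ, let E₁ and F be Banach spaces, let E₂ be a G-Banach space, and let β : E₁ × E₂ → F be a continuous bilinear map. For all ξ₁ ∈ C_c(G×G, E₁) and ξ₂ ∈ C_c(G×G, E₂), the convolution (ξ₁ * ξ₂)(s,t) := ∫_G β(ξ₁(r,t), r·ξ₂(r⁻¹s, r⁻¹t)) dμ(r) is a well-defined continuous compactly supported F-valued function on G×G, and ‖ξ₁ * ξ₂‖₁ ≤ ‖β‖ · ‖ξ₁‖₁ · ‖ξ₂‖₁, where ‖β‖ is the operator norm of the bilinear map β. -/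
/-!
For fixed `p = (s, t)` the integrand `r ↦ β (ξ₁ (r, t)) (r • ξ₂ (r⁻¹ s, r⁻¹ t))` is jointly
continuous in `(p, r)` and vanishes outside the compact set `((K₁ K₂) × T₁) × K₁`, where `Kᵢ`
and `T₁` are the projections of the supports of `ξᵢ`. Integrability, continuity and compact
support of the convolution are therefore instances of general facts about parametric integrals of
compactly supported kernels. For the estimate, fix `t`, bound `‖∫‖` by `∫ ‖·‖`, swap the two
integrals (Fubini), and use left invariance of `μ`:
`∫ ‖ξ₂ (r⁻¹ s, r⁻¹ t)‖ ds = ∫ ‖ξ₂ (s, r⁻¹ t)‖ ds ≤ ‖ξ₂‖₁`.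
-/

open MeasureTheory Pointwise Set Function Topology

lemma isClosedEmbedding_prodMkLeft {X Y : Type*} [TopologicalSpace X] [TopologicalSpace Y]
    [T1Space Y] (y : Y) : IsClosedEmbedding fun x : X => (x, y) :=
  ⟨isEmbedding_prodMkLeft y, by
    convert isClosed_univ.prod (isClosed_singleton (x := y))
    ext ⟨a, b⟩
    simp [eq_comm]⟩

section CompactlySupportedKernel

variable {X Y E : Type*} [TopologicalSpace X] [TopologicalSpace Y] [NormedAddCommGroup E]
  {f : X → Y → E}

lemma eq_zero_of_notMem_fst_image_tsupport_uncurry {x : X} {y : Y}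
    (hx : x ∉ Prod.fst '' tsupport f.uncurry) : f x y = 0 :=
  image_eq_zero_of_notMem_tsupport (f := f.uncurry) fun h => hx ⟨(x, y), h, rfl⟩

lemma eq_zero_of_notMem_snd_image_tsupport_uncurry {x : X} {y : Y}
    (hy : y ∉ Prod.snd '' tsupport f.uncurry) : f x y = 0 :=
  image_eq_zero_of_notMem_tsupport (f := f.uncurry) fun h => hy ⟨(x, y), h, rfl⟩

variable [MeasurableSpace Y] {ν : Measure Y}

lemma hasCompactSupport_integral_of_hasCompactSupport_uncurry [NormedSpace ℝ E] [T2Space X]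
    (hfs : HasCompactSupport f.uncurry) : HasCompactSupport fun x => ∫ y, f x y ∂ν :=
  .intro (hfs.image continuous_fst) fun _ hx => by
    simp [eq_zero_of_notMem_fst_image_tsupport_uncurry hx]

variable [OpensMeasurableSpace Y] [IsFiniteMeasureOnCompacts ν]

lemma integrable_of_hasCompactSupport_uncurry [T2Space Y] (hf : Continuous f.uncurry)
    (hfs : HasCompactSupport f.uncurry) (x : X) : Integrable (f x) ν :=
  (hf.comp (continuous_const.prodMk continuous_id)).integrable_of_hasCompactSupport <|
    .intro (hfs.image continuous_snd) fun _ => eq_zero_of_notMem_snd_image_tsupport_uncurry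

lemma continuous_integral_of_hasCompactSupport_uncurry [NormedSpace ℝ E]
    (hf : Continuous f.uncurry) (hfs : HasCompactSupport f.uncurry) :
    Continuous fun x => ∫ y, f x y ∂ν := by
  rw [← continuousOn_univ]
  exact continuousOn_integral_of_compact_support (hfs.image continuous_snd)
    hf.continuousOn fun _ _ _ => eq_zero_of_notMem_snd_image_tsupport_uncurry

lemma bddAbove_range_integral_norm_of_hasCompactSupport_uncurry [T2Space X]
    (hf : Continuous f.uncurry) (hfs : HasCompactSupport f.uncurry) :
    BddAbove (range fun x => ∫ y, ‖f x y‖ ∂ν) :=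
  (continuous_integral_of_hasCompactSupport_uncurry (f := fun x y => ‖f x y‖) hf.norm
    hfs.norm).bddAbove_range_of_hasCompactSupport
    (hasCompactSupport_integral_of_hasCompactSupport_uncurry (f := fun x y => ‖f x y‖) hfs.norm)

lemma integral_norm_integral_le_of_hasCompactSupport_uncurry [NormedSpace ℝ E] [T2Space X]
    [MeasurableSpace X] [OpensMeasurableSpace X] {μ : Measure X} [IsFiniteMeasureOnCompacts μ]
    (hf : Continuous f.uncurry) (hfs : HasCompactSupport f.uncurry) :
    ∫ x, ‖∫ y, f x y ∂ν‖ ∂μ ≤ ∫ y, ∫ x, ‖f x y‖ ∂μ ∂ν := by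
  have hint : Integrable (fun x => ∫ y, ‖f x y‖ ∂ν) μ :=
    (continuous_integral_of_hasCompactSupport_uncurry (f := fun x y => ‖f x y‖) hf.norm
      hfs.norm).integrable_of_hasCompactSupport
      (hasCompactSupport_integral_of_hasCompactSupport_uncurry (f := fun x y => ‖f x y‖) hfs.norm)
  calc ∫ x, ‖∫ y, f x y ∂ν‖ ∂μ ≤ ∫ x, ∫ y, ‖f x y‖ ∂ν ∂μ :=
        integral_mono_of_nonneg (.of_forall fun _ => norm_nonneg _) hint
          (.of_forall fun _ => norm_integral_le_integral_norm _)
    _ = ∫ y, ∫ x, ‖f x y‖ ∂μ ∂ν :=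
        integral_integral_swap_of_hasCompactSupport (f := fun x y => ‖f x y‖) hf.norm hfs.norm

end CompactlySupportedKernel

section SupIntegralNorm

variable {X E : Type*} [MeasurableSpace X] (μ : Measure X) [NormedAddCommGroup E]

/-- The norm `‖ξ‖₁`. -/
noncomputable def supIntegralNorm (ξ : X × X → E) : ℝ :=
  ⨆ t, ∫ s, ‖ξ (s, t)‖ ∂μ

variable {μ} {ξ : X × X → E}

lemma supIntegralNorm_nonneg : 0 ≤ supIntegralNorm μ ξ :=
  Real.iSup_nonneg fun _ => integral_nonneg fun _ => norm_nonneg _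

variable [TopologicalSpace X] [T2Space X] [OpensMeasurableSpace X] [IsFiniteMeasureOnCompacts μ]

lemma integrable_apply_prodMk_of_hasCompactSupport (hξ : Continuous ξ)
    (hξs : HasCompactSupport ξ) (t : X) : Integrable (fun s => ξ (s, t)) μ :=
  integrable_of_hasCompactSupport_uncurry (f := fun t s => ξ (s, t)) (hξ.comp continuous_swap)
    (hξs.comp_homeomorph (Homeomorph.prodComm X X)) t

lemma integral_norm_le_supIntegralNorm (hξ : Continuous ξ) (hξs : HasCompactSupport ξ) (t : X) :
    ∫ s, ‖ξ (s, t)‖ ∂μ ≤ supIntegralNorm μ ξ :=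
  le_ciSup (bddAbove_range_integral_norm_of_hasCompactSupport_uncurry (f := fun t s => ξ (s, t))
    (hξ.comp continuous_swap) (hξs.comp_homeomorph (Homeomorph.prodComm X X))) t

end SupIntegralNorm

section Convolution

variable {G 𝕜 E₁ E₂ F : Type*} [Group G] [NontriviallyNormedField 𝕜]
  [NormedAddCommGroup E₁] [NormedSpace 𝕜 E₁] [NormedAddCommGroup E₂] [NormedSpace 𝕜 E₂]
  [NormedAddCommGroup F] [NormedSpace 𝕜 F]
  (act : G → E₂ → E₂) (β : E₁ →L[𝕜] E₂ →L[𝕜] F) (ξ₁ : G × G → E₁) (ξ₂ : G × G → E₂)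

/-- `(ξ₁ * ξ₂) p = ∫ convIntegrand act β ξ₁ ξ₂ p r dμ(r)`. -/
def convIntegrand (p : G × G) (r : G) : F :=
  β (ξ₁ (r, p.2)) (act r (ξ₂ (r⁻¹ * p.1, r⁻¹ * p.2)))

variable {act ξ₁ ξ₂}

lemma norm_convIntegrand_le (hact : ∀ g x, ‖act g x‖ = ‖x‖) (p : G × G) (r : G) :
    ‖convIntegrand act β ξ₁ ξ₂ p r‖ ≤ ‖β‖ * ‖ξ₁ (r, p.2)‖ * ‖ξ₂ (r⁻¹ * p.1, r⁻¹ * p.2)‖ := by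
  unfold convIntegrand
  simpa only [hact] using β.le_opNorm₂ (ξ₁ (r, p.2)) (act r (ξ₂ (r⁻¹ * p.1, r⁻¹ * p.2)))

variable [TopologicalSpace G] [IsTopologicalGroup G]

lemma continuous_convIntegrand (hact : Continuous fun q : G × E₂ => act q.1 q.2)
    (hξ₁ : Continuous ξ₁) (hξ₂ : Continuous ξ₂) :
    Continuous (convIntegrand act β ξ₁ ξ₂).uncurry := by
  have hξ₂' : Continuous fun q : (G × G) × G => act q.2 (ξ₂ (q.2⁻¹ * q.1.1, q.2⁻¹ * q.1.2)) :=
    hact.comp (continuous_snd.prodMk (hξ₂.comp (by fun_prop)))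
  exact β.continuous₂.comp ((hξ₁.comp (by fun_prop)).prodMk hξ₂')

lemma hasCompactSupport_convIntegrand [T2Space G] (hact : ∀ g, act g 0 = 0)
    (hξ₁ : HasCompactSupport ξ₁) (hξ₂ : HasCompactSupport ξ₂) :
    HasCompactSupport (convIntegrand act β ξ₁ ξ₂).uncurry := by
  refine .intro ((((hξ₁.image continuous_fst).mul (hξ₂.image continuous_fst)).prod
    (hξ₁.image continuous_snd)).prod (hξ₁.image continuous_fst)) fun ⟨⟨s, t⟩, r⟩ h => ?_
  by_contra hne
  have h₁ : (r, t) ∈ tsupport ξ₁ := subset_tsupport _ fun h₁ => hne <| by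
    simp [convIntegrand, h₁]
  have h₂ : (r⁻¹ * s, r⁻¹ * t) ∈ tsupport ξ₂ := subset_tsupport _ fun h₂ => hne <| by
    simp [convIntegrand, h₂, hact]
  refine h ⟨⟨?_, ⟨_, h₁, rfl⟩⟩, ⟨_, h₁, rfl⟩⟩
  simpa using Set.mul_mem_mul (mem_image_of_mem Prod.fst h₁) (mem_image_of_mem Prod.fst h₂)

variable [T2Space G] [MeasurableSpace G] [BorelSpace G] {μ : Measure G}
  [IsFiniteMeasureOnCompacts μ] [μ.IsMulLeftInvariant]

lemma integral_norm_convIntegrand_le (hact : ∀ g x, ‖act g x‖ = ‖x‖) (hξ₂ : Continuous ξ₂)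
    (hξ₂s : HasCompactSupport ξ₂) (r t : G) :
    ∫ s, ‖convIntegrand act β ξ₁ ξ₂ (s, t) r‖ ∂μ ≤ ‖β‖ * ‖ξ₁ (r, t)‖ * supIntegralNorm μ ξ₂ := by
  have hint : Integrable (fun s => ‖ξ₂ (r⁻¹ * s, r⁻¹ * t)‖) μ :=
    ((integrable_apply_prodMk_of_hasCompactSupport hξ₂ hξ₂s _).comp_mul_left r⁻¹).norm
  calc ∫ s, ‖convIntegrand act β ξ₁ ξ₂ (s, t) r‖ ∂μ
      ≤ ∫ s, ‖β‖ * ‖ξ₁ (r, t)‖ * ‖ξ₂ (r⁻¹ * s, r⁻¹ * t)‖ ∂μ :=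
        integral_mono_of_nonneg (.of_forall fun _ => norm_nonneg _) (hint.const_mul _)
          (.of_forall fun s => norm_convIntegrand_le β hact (s, t) r)
    _ = ‖β‖ * ‖ξ₁ (r, t)‖ * ∫ s, ‖ξ₂ (s, r⁻¹ * t)‖ ∂μ := by
        rw [integral_const_mul, integral_mul_left_eq_self (fun s => ‖ξ₂ (s, r⁻¹ * t)‖) r⁻¹]
    _ ≤ ‖β‖ * ‖ξ₁ (r, t)‖ * supIntegralNorm μ ξ₂ := by
        gcongr
        exact integral_norm_le_supIntegralNorm hξ₂ hξ₂s _

theorem supIntegralNorm_conv_le [NormedSpace ℝ F]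
    (hact_cont : Continuous fun q : G × E₂ => act q.1 q.2)
    (hact_isom : ∀ g x, ‖act g x‖ = ‖x‖) (hξ₁ : Continuous ξ₁) (hξ₁s : HasCompactSupport ξ₁)
    (hξ₂ : Continuous ξ₂) (hξ₂s : HasCompactSupport ξ₂) :
    supIntegralNorm μ (fun p => ∫ r, convIntegrand act β ξ₁ ξ₂ p r ∂μ)
      ≤ ‖β‖ * supIntegralNorm μ ξ₁ * supIntegralNorm μ ξ₂ := by
  have hk := continuous_convIntegrand β hact_cont hξ₁ hξ₂
  have hact_zero : ∀ g, act g 0 = 0 := fun g => norm_eq_zero.mp (by rw [hact_isom, norm_zero])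
  have hks := hasCompactSupport_convIntegrand β hact_zero hξ₁s hξ₂s
  refine ciSup_le fun t => ?_
  have hslice : IsClosedEmbedding fun q : G × G => ((q.1, t), q.2) :=
    (isClosedEmbedding_prodMkLeft t).prodMap .id
  have hkt : Continuous (uncurry fun s r => convIntegrand act β ξ₁ ξ₂ (s, t) r) :=
    hk.comp hslice.continuous
  have hkts : HasCompactSupport (uncurry fun s r => convIntegrand act β ξ₁ ξ₂ (s, t) r) :=
    -- the ascription postpones unifying `uncurry _ ∘ _` with the stated function, which is slow
    (hks.comp_isClosedEmbedding hslice :)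
  set N₂ := supIntegralNorm μ ξ₂
  calc ∫ s, ‖∫ r, convIntegrand act β ξ₁ ξ₂ (s, t) r ∂μ‖ ∂μ
      ≤ ∫ r, ∫ s, ‖convIntegrand act β ξ₁ ξ₂ (s, t) r‖ ∂μ ∂μ :=
        integral_norm_integral_le_of_hasCompactSupport_uncurry hkt hkts
    _ ≤ ∫ r, ‖β‖ * N₂ * ‖ξ₁ (r, t)‖ ∂μ :=
        integral_mono_of_nonneg (.of_forall fun _ => integral_nonneg fun _ => norm_nonneg _)
          ((integrable_apply_prodMk_of_hasCompactSupport hξ₁ hξ₁s t).norm.const_mul _)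
          (.of_forall fun r => (integral_norm_convIntegrand_le β hact_isom hξ₂ hξ₂s r t).trans_eq
            (by ring))
    _ = ‖β‖ * N₂ * ∫ r, ‖ξ₁ (r, t)‖ ∂μ := integral_const_mul _ _
    _ ≤ ‖β‖ * N₂ * supIntegralNorm μ ξ₁ :=
        mul_le_mul_of_nonneg_left (integral_norm_le_supIntegralNorm hξ₁ hξ₁s t)
          (mul_nonneg (norm_nonneg β) supIntegralNorm_nonneg)
    _ = ‖β‖ * supIntegralNorm μ ξ₁ * N₂ := by ring

end Convolution

theorem stmt_0_general
    {G : Type*} [Group G] [TopologicalSpace G] [IsTopologicalGroup G]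
    [T2Space G] [MeasurableSpace G] [BorelSpace G]
    (μ : Measure G) [μ.IsHaarMeasure]
    {E₁ E₂ F : Type*}
    [NormedAddCommGroup E₁] [NormedSpace ℂ E₁]
    [NormedAddCommGroup E₂] [NormedSpace ℂ E₂]
    [NormedAddCommGroup F] [NormedSpace ℂ F]
    -- `E₂` is a `G`-Banach space:
    (act : G → E₂ → E₂)
    (hact_cont : Continuous fun p : G × E₂ => act p.1 p.2)
    (hact_isom : ∀ g x, ‖act g x‖ = ‖x‖)
    -- a continuous bilinear map `β : E₁ × E₂ → F`:
    (β : E₁ →L[ℂ] E₂ →L[ℂ] F)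
    -- `ξ₁ ∈ C_c(G×G, E₁)` and `ξ₂ ∈ C_c(G×G, E₂)`:
    (ξ₁ : G × G → E₁) (hξ₁c : Continuous ξ₁) (hξ₁s : HasCompactSupport ξ₁)
    (ξ₂ : G × G → E₂) (hξ₂c : Continuous ξ₂) (hξ₂s : HasCompactSupport ξ₂) :
    (∀ s t : G, Integrable
        (fun r => β (ξ₁ (r, t)) (act r (ξ₂ (r⁻¹ * s, r⁻¹ * t)))) μ) ∧
    Continuous (fun p : G × G =>
        ∫ r, β (ξ₁ (r, p.2)) (act r (ξ₂ (r⁻¹ * p.1, r⁻¹ * p.2))) ∂μ) ∧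
    HasCompactSupport (fun p : G × G =>
        ∫ r, β (ξ₁ (r, p.2)) (act r (ξ₂ (r⁻¹ * p.1, r⁻¹ * p.2))) ∂μ) ∧
    (⨆ t : G, ∫ s, ‖∫ r, β (ξ₁ (r, t)) (act r (ξ₂ (r⁻¹ * s, r⁻¹ * t))) ∂μ‖ ∂μ)
      ≤ ‖β‖ * (⨆ t : G, ∫ s, ‖ξ₁ (s, t)‖ ∂μ) * (⨆ t : G, ∫ s, ‖ξ₂ (s, t)‖ ∂μ) := by
  have hact_zero : ∀ g, act g 0 = 0 := fun g => norm_eq_zero.mp (by rw [hact_isom, norm_zero])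
  have hk := continuous_convIntegrand β hact_cont hξ₁c hξ₂c
  have hks := hasCompactSupport_convIntegrand β hact_zero hξ₁s hξ₂s
  exact ⟨fun s t => integrable_of_hasCompactSupport_uncurry hk hks (s, t),
    continuous_integral_of_hasCompactSupport_uncurry hk hks,
    hasCompactSupport_integral_of_hasCompactSupport_uncurry hks,
    supIntegralNorm_conv_le β hact_cont hact_isom hξ₁c hξ₁s hξ₂c hξ₂s⟩

/-- Convolution of compactly supported continuous functions on `G × G`
with values in Banach spaces, multiplied via a continuous bilinear map `β`, is a
well-defined continuous compactly supported function, and its `L¹`-type norm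
`‖ξ‖₁ = ⨆ t, ∫ ‖ξ (s,t)‖ dμ s` satisfies `‖ξ₁ * ξ₂‖₁ ≤ ‖β‖ ‖ξ₁‖₁ ‖ξ₂‖₁`. -/
theorem stmt_0
    {G : Type*} [Group G] [TopologicalSpace G] [IsTopologicalGroup G]
    [LocallyCompactSpace G] [T2Space G] [MeasurableSpace G] [BorelSpace G]
    (μ : Measure G) [μ.IsHaarMeasure]
    {E₁ E₂ F : Type*}
    [NormedAddCommGroup E₁] [NormedSpace ℂ E₁] [CompleteSpace E₁]
    [NormedAddCommGroup E₂] [NormedSpace ℂ E₂] [CompleteSpace E₂]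
    [NormedAddCommGroup F] [NormedSpace ℂ F] [CompleteSpace F]
    -- `E₂` is a `G`-Banach space:
    (act : G → E₂ → E₂)
    (hact_cont : Continuous fun p : G × E₂ => act p.1 p.2)
    (hact_one : ∀ x, act 1 x = x)
    (hact_mul : ∀ g h x, act (g * h) x = act g (act h x))
    (hact_add : ∀ g x y, act g (x + y) = act g x + act g y)
    (hact_smul : ∀ g (c : ℂ) x, act g (c • x) = c • act g x)
    (hact_isom : ∀ g x, ‖act g x‖ = ‖x‖)
    -- a continuous bilinear map `β : E₁ × E₂ → F`:
    (β : E₁ →L[ℂ] E₂ →L[ℂ] F)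
    -- `ξ₁ ∈ C_c(G×G, E₁)` and `ξ₂ ∈ C_c(G×G, E₂)`:
    (ξ₁ : G × G → E₁) (hξ₁c : Continuous ξ₁) (hξ₁s : HasCompactSupport ξ₁)
    (ξ₂ : G × G → E₂) (hξ₂c : Continuous ξ₂) (hξ₂s : HasCompactSupport ξ₂) :
    (∀ s t : G, Integrable
        (fun r => β (ξ₁ (r, t)) (act r (ξ₂ (r⁻¹ * s, r⁻¹ * t)))) μ) ∧
    Continuous (fun p : G × G =>
        ∫ r, β (ξ₁ (r, p.2)) (act r (ξ₂ (r⁻¹ * p.1, r⁻¹ * p.2))) ∂μ) ∧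
    HasCompactSupport (fun p : G × G =>
        ∫ r, β (ξ₁ (r, p.2)) (act r (ξ₂ (r⁻¹ * p.1, r⁻¹ * p.2))) ∂μ) ∧
    (⨆ t : G, ∫ s, ‖∫ r, β (ξ₁ (r, t)) (act r (ξ₂ (r⁻¹ * s, r⁻¹ * t))) ∂μ‖ ∂μ)
      ≤ ‖β‖ * (⨆ t : G, ∫ s, ‖ξ₁ (s, t)‖ ∂μ) * (⨆ t : G, ∫ s, ‖ξ₂ (s, t)‖ ∂μ) :=
  stmt_0_general μ act hact_cont hact_isom β ξ₁ hξ₁c hξ₁s ξ₂ hξ₂c hξ₂s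
end

section
/- Let G be a locally compact Hausdorff group with left Haar measure μ and let A be a G-Banach algebra. The convolution on C_c(G×G, A) defined by (ξ * η)(s,t) := ∫_G ξ(r,t) · (r·η(r⁻¹s, r⁻¹t)) dμ(r) is associative, i.e. (ξ * η) * ζ = ξ * (η * ζ) for all ξ, η, ζ ∈ C_c(G×G, A), and satisfies ‖ξ * η‖₁ ≤ ‖ξ‖₁ · ‖η‖₁. (This is the content of the statement that the completion L¹(G⋉G, A) of C_c(G×G,A) for ‖·‖₁ is a Banach algebra under convolution.) -/
/-!
Fix the second coordinate `t`. Both claims concern double integrals over `G × G` of continuous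
integrands supported in `(K_ξ K_η) × K_ξ`, where `K_ξ, K_η` are the first projections of the
supports of `ξ, η`; Fubini for compactly supported continuous functions (which needs no
σ-finiteness of `μ`) lets us swap the two integrals.

For associativity, after the swap the substitution `r ↦ u r` (left invariance of `μ`), together
with `(u r)·a = u·(r·a)` and `u·(a b) = (u·a)(u·b)`, turns the integrand of `(ξ * η) * ζ` into that
of `ξ * (η * ζ)`. For the norm bound, isometry of the action gives
`‖(ξ * η)(s,t)‖ ≤ ∫ ‖ξ(r,t)‖ ‖η(r⁻¹s, r⁻¹t)‖ dr`; swapping and substituting `s ↦ r s` bounds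
`∫ ‖(ξ * η)(s,t)‖ ds` by `∫ ‖ξ(r,t)‖ ∫ ‖η(s, r⁻¹t)‖ ds dr ≤ ‖ξ‖₁ ‖η‖₁`.
-/

open MeasureTheory

/-- The convolution product on `C_c(G×G, A)` underlying `L¹(G⋉G, A)`. -/
noncomputable def conv2 {G A : Type*} [Group G] [MeasurableSpace G]
    [NormedRing A] [NormedSpace ℝ A]
    (μ : Measure G) (act : G → A → A) (ξ η : G × G → A) : G × G → A :=
  fun p => ∫ r, ξ (r, p.2) * act r (η (r⁻¹ * p.1, r⁻¹ * p.2)) ∂μ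

/-- The norm `‖ξ‖₁ = ⨆ t, ∫ ‖ξ (s,t)‖ dμ s` on `C_c(G×G, A)`. -/
noncomputable def onenorm {G A : Type*} [MeasurableSpace G] [NormedAddCommGroup A]
    (μ : Measure G) (ξ : G × G → A) : ℝ :=
  ⨆ t : G, ∫ s, ‖ξ (s, t)‖ ∂μ

open Set
open scoped Pointwise

section Support

variable {X Y E : Type*} [TopologicalSpace X] [TopologicalSpace Y]

theorem apply_eq_zero_of_notMem_image_fst_tsupport [Zero E] {f : X × Y → E} {x : X}
    (hx : x ∉ Prod.fst '' tsupport f) (y : Y) : f (x, y) = 0 :=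
  image_eq_zero_of_notMem_tsupport fun h => hx ⟨(x, y), h, rfl⟩

theorem apply_eq_zero_of_notMem_image_snd_tsupport [Zero E] {f : X × Y → E} {y : Y}
    (hy : y ∉ Prod.snd '' tsupport f) (x : X) : f (x, y) = 0 :=
  image_eq_zero_of_notMem_tsupport fun h => hy ⟨(x, y), h, rfl⟩

theorem HasCompactSupport.comp_prodMk_const [R1Space X] [Zero E] {f : X × Y → E}
    (hf : HasCompactSupport f) (y : Y) : HasCompactSupport fun x => f (x, y) :=
  .intro (hf.image continuous_fst) fun _ hx => apply_eq_zero_of_notMem_image_fst_tsupport hx y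

end Support

section Integral

variable {X Y E F : Type*} [MeasurableSpace X] {μ : Measure X}
  [NormedAddCommGroup E] [NormedSpace ℝ E] [NormedAddCommGroup F] [NormedSpace ℝ F]

theorem integral_comp_continuous_addMonoidHom [CompleteSpace E] [CompleteSpace F]
    (f : E →+ F) (hf : Continuous f) {φ : X → E} (hφ : Integrable φ μ) :
    ∫ x, f (φ x) ∂μ = f (∫ x, φ x ∂μ) :=
  (f.toRealLinearMap hf).integral_comp_comm hφ

variable [TopologicalSpace X] [OpensMeasurableSpace X] [TopologicalSpace Y]
  [MeasurableSpace Y] [OpensMeasurableSpace Y] {ν : Measure Y}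

theorem integrable_integral_of_hasCompactSupport [R1Space X] [IsFiniteMeasureOnCompacts μ]
    [IsFiniteMeasureOnCompacts ν] {f : X → Y → E} (hf : Continuous f.uncurry)
    (h'f : HasCompactSupport f.uncurry) : Integrable (fun x => ∫ y, f x y ∂ν) μ := by
  have hcont : Continuous fun x => ∫ y, f x y ∂ν := by
    refine continuousOn_univ.1 (continuousOn_integral_of_compact_support
      (h'f.image continuous_snd) hf.continuousOn fun x y _ hy => ?_)
    exact apply_eq_zero_of_notMem_image_snd_tsupport (f := f.uncurry) hy x
  refine hcont.integrable_of_hasCompactSupport (.intro (h'f.image continuous_fst) fun x hx => ?_)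
  have hfx (y : Y) : f x y = 0 := apply_eq_zero_of_notMem_image_fst_tsupport (f := f.uncurry) hx y
  simp only [hfx, integral_zero]

end Integral

section OneNorm

variable {G A : Type*} [TopologicalSpace G] [MeasurableSpace G]
  {μ : Measure G} [IsFiniteMeasureOnCompacts μ] [NormedAddCommGroup A] {ξ : G × G → A}

theorem bddAbove_range_integral_norm (hξc : Continuous ξ) (hξs : HasCompactSupport ξ) :
    BddAbove (range fun t => ∫ s, ‖ξ (s, t)‖ ∂μ) := by
  obtain ⟨C, hC⟩ := hξc.bounded_above_of_compact_support hξs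
  have hK : IsCompact (Prod.fst '' tsupport ξ) := hξs.image continuous_fst
  refine ⟨C * μ.real (Prod.fst '' tsupport ξ), ?_⟩
  rintro _ ⟨t, rfl⟩
  calc ∫ s, ‖ξ (s, t)‖ ∂μ = ∫ s in Prod.fst '' tsupport ξ, ‖ξ (s, t)‖ ∂μ :=
        (setIntegral_eq_integral_of_forall_compl_eq_zero fun s hs => by
          simp [apply_eq_zero_of_notMem_image_fst_tsupport hs t]).symm
    _ ≤ C * μ.real (Prod.fst '' tsupport ξ) :=
        (le_abs_self _).trans (norm_setIntegral_le_of_norm_le_const hK.measure_lt_top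
          fun s _ => (norm_norm _).trans_le (hC (s, t)))

theorem integral_norm_le_onenorm (hξc : Continuous ξ) (hξs : HasCompactSupport ξ) (t : G) :
    ∫ s, ‖ξ (s, t)‖ ∂μ ≤ onenorm μ ξ :=
  le_ciSup (bddAbove_range_integral_norm hξc hξs) t

theorem onenorm_nonneg [Nonempty G] (hξc : Continuous ξ) (hξs : HasCompactSupport ξ) :
    0 ≤ onenorm μ ξ :=
  (integral_nonneg fun _ => norm_nonneg _).trans
    (integral_norm_le_onenorm hξc hξs (Classical.arbitrary G))

end OneNorm

section Convolution

variable {G : Type*} [Group G] [TopologicalSpace G] [IsTopologicalGroup G]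

theorem hasCompactSupport_of_eq_zero_of_conv2_factor {A E : Type*} [Zero A] [Zero E]
    {ξ η : G × G → A} (hξs : HasCompactSupport ξ) (hηs : HasCompactSupport η) (t : G)
    {Φ : G × G → E} (hΦ : ∀ x y, ξ (y, t) = 0 ∨ η (y⁻¹ * x, y⁻¹ * t) = 0 → Φ (x, y) = 0) :
    HasCompactSupport Φ := by
  set Kξ := Prod.fst '' tsupport ξ
  set Kη := Prod.fst '' tsupport η
  have hKξ : IsCompact Kξ := hξs.image continuous_fst
  have hKξη : IsCompact (Kξ * Kη) := hKξ.mul (hηs.image continuous_fst)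
  refine .intro (hKξη.prod hKξ) fun ⟨x, y⟩ hxy => hΦ x y ?_
  by_contra! h
  have hy : y ∈ Kξ := ⟨_, subset_tsupport _ h.1, rfl⟩
  have hx : y * (y⁻¹ * x) ∈ Kξ * Kη := mul_mem_mul hy ⟨_, subset_tsupport _ h.2, rfl⟩
  exact hxy ⟨by rwa [mul_inv_cancel_left] at hx, hy⟩

variable [MeasurableSpace G] [BorelSpace G] {μ : Measure G} [IsFiniteMeasureOnCompacts μ]
  {A : Type*} [NormedRing A] {act : G → A → A} {ξ η ζ : G × G → A}

theorem integrable_conv2_integrand (hact_cont : Continuous fun p : G × A => act p.1 p.2)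
    (hξc : Continuous ξ) (hξs : HasCompactSupport ξ) (hηc : Continuous η) (s t : G) :
    Integrable (fun r => ξ (r, t) * act r (η (r⁻¹ * s, r⁻¹ * t))) μ := by
  refine Continuous.integrable_of_hasCompactSupport (by fun_prop) ?_
  exact (hξs.comp_prodMk_const t).mul_right (f' := fun r => act r (η (r⁻¹ * s, r⁻¹ * t)))

variable [NormedSpace ℝ A]

theorem integral_norm_conv2_le [μ.IsMulLeftInvariant] (hact_isom : ∀ g a, ‖act g a‖ = ‖a‖)
    (hξc : Continuous ξ) (hξs : HasCompactSupport ξ)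
    (hηc : Continuous η) (hηs : HasCompactSupport η) (t : G) :
    ∫ s, ‖conv2 μ act ξ η (s, t)‖ ∂μ ≤ ∫ r, ‖ξ (r, t)‖ * ∫ s, ‖η (s, r⁻¹ * t)‖ ∂μ ∂μ := by
  set H : G → G → ℝ := fun s r => ‖ξ (r, t)‖ * ‖η (r⁻¹ * s, r⁻¹ * t)‖
  have hHc : Continuous H.uncurry := by fun_prop
  have hHs : HasCompactSupport H.uncurry :=
    hasCompactSupport_of_eq_zero_of_conv2_factor hξs hηs t fun s r h => by
      rcases h with h | h <;> simp [H, h]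
  have hH_le (s : G) : ‖conv2 μ act ξ η (s, t)‖ ≤ ∫ r, H s r ∂μ := by
    refine norm_integral_le_of_norm_le ?_ (.of_forall fun r => ?_)
    · exact Continuous.integrable_of_hasCompactSupport (by fun_prop)
        ((hξs.comp_prodMk_const t).norm.mul_right (f' := fun r => ‖η (r⁻¹ * s, r⁻¹ * t)‖))
    · exact (norm_mul_le _ _).trans_eq (by rw [hact_isom])
  calc ∫ s, ‖conv2 μ act ξ η (s, t)‖ ∂μ ≤ ∫ s, ∫ r, H s r ∂μ ∂μ :=
        integral_mono_of_nonneg (.of_forall fun _ => norm_nonneg _)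
          (integrable_integral_of_hasCompactSupport hHc hHs) (.of_forall hH_le)
    _ = ∫ r, ∫ s, H s r ∂μ ∂μ := integral_integral_swap_of_hasCompactSupport hHc hHs
    _ = ∫ r, ‖ξ (r, t)‖ * ∫ s, ‖η (s, r⁻¹ * t)‖ ∂μ ∂μ := by
        refine integral_congr_ae (.of_forall fun r => ?_)
        simp only [H, integral_const_mul]
        rw [integral_mul_left_eq_self (fun s => ‖η (s, r⁻¹ * t)‖) r⁻¹]


theorem onenorm_conv2_le [μ.IsMulLeftInvariant] (hact_isom : ∀ g a, ‖act g a‖ = ‖a‖)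
    (hξc : Continuous ξ) (hξs : HasCompactSupport ξ)
    (hηc : Continuous η) (hηs : HasCompactSupport η) :
    onenorm μ (conv2 μ act ξ η) ≤ onenorm μ ξ * onenorm μ η := by
  refine ciSup_le fun t => (integral_norm_conv2_le hact_isom hξc hξs hηc hηs t).trans ?_
  calc ∫ r, ‖ξ (r, t)‖ * ∫ s, ‖η (s, r⁻¹ * t)‖ ∂μ ∂μ ≤ ∫ r, ‖ξ (r, t)‖ * onenorm μ η ∂μ :=
        integral_mono_of_nonneg
          (.of_forall fun _ => mul_nonneg (norm_nonneg _) (integral_nonneg fun _ => norm_nonneg _))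
          ((hξc.comp₂ continuous_id continuous_const).norm.integrable_of_hasCompactSupport
            (hξs.comp_prodMk_const t).norm |>.mul_const _)
          (.of_forall fun r => mul_le_mul_of_nonneg_left
            (integral_norm_le_onenorm hηc hηs _) (norm_nonneg _))
    _ = (∫ r, ‖ξ (r, t)‖ ∂μ) * onenorm μ η := integral_mul_const _ _
    _ ≤ onenorm μ ξ * onenorm μ η :=
        mul_le_mul_of_nonneg_right (integral_norm_le_onenorm hξc hξs t) (onenorm_nonneg hηc hηs)

variable [CompleteSpace A]

theorem conv2_apply_mul (hact_cont : Continuous fun p : G × A => act p.1 p.2)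
    (hξc : Continuous ξ) (hξs : HasCompactSupport ξ) (hηc : Continuous η) (s t : G) (c : A) :
    conv2 μ act ξ η (s, t) * c = ∫ r, ξ (r, t) * act r (η (r⁻¹ * s, r⁻¹ * t)) * c ∂μ :=
  (integral_comp_continuous_addMonoidHom (.mulRight c) (continuous_mul_const c)
    (integrable_conv2_integrand hact_cont hξc hξs hηc s t)).symm

theorem mul_act_conv2_apply (hact_cont : Continuous fun p : G × A => act p.1 p.2)
    (hact_add : ∀ g a b, act g (a + b) = act g a + act g b)
    (hξc : Continuous ξ) (hξs : HasCompactSupport ξ) (hηc : Continuous η) (s t : G)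
    (a : A) (g : G) :
    a * act g (conv2 μ act ξ η (s, t))
      = ∫ r, a * act g (ξ (r, t) * act r (η (r⁻¹ * s, r⁻¹ * t))) ∂μ :=
  (integral_comp_continuous_addMonoidHom ((AddMonoidHom.mulLeft a).comp (.mk' (act g) (hact_add g)))
    (continuous_const.mul (hact_cont.comp₂ continuous_const continuous_id))
    (integrable_conv2_integrand hact_cont hξc hξs hηc s t)).symm

theorem conv2_assoc [μ.IsMulLeftInvariant] (hact_cont : Continuous fun p : G × A => act p.1 p.2)
    (hact_mul : ∀ g h a, act (g * h) a = act g (act h a))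
    (hact_add : ∀ g a b, act g (a + b) = act g a + act g b)
    (hact_ring : ∀ g a b, act g (a * b) = act g a * act g b)
    (hξc : Continuous ξ) (hξs : HasCompactSupport ξ)
    (hηc : Continuous η) (hηs : HasCompactSupport η) (hζc : Continuous ζ) :
    conv2 μ act (conv2 μ act ξ η) ζ = conv2 μ act ξ (conv2 μ act η ζ) := by
  ext ⟨s, t⟩
  set F : G → G → A := fun r u =>
    ξ (u, t) * act u (η (u⁻¹ * r, u⁻¹ * t)) * act r (ζ (r⁻¹ * s, r⁻¹ * t))
  have hFc : Continuous F.uncurry := by fun_prop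
  have hact_zero (g : G) : act g 0 = 0 := (AddMonoidHom.mk' (act g) (hact_add g)).map_zero
  have hFs : HasCompactSupport F.uncurry :=
    hasCompactSupport_of_eq_zero_of_conv2_factor hξs hηs t fun r u h => by
      rcases h with h | h <;> simp [F, h, hact_zero]
  have hF_shift (u r : G) : F (u * r) u
      = ξ (u, t) * act u (η (r, u⁻¹ * t) * act r (ζ (r⁻¹ * (u⁻¹ * s), r⁻¹ * (u⁻¹ * t)))) := by
    simp only [F, inv_mul_cancel_left, mul_inv_rev, mul_assoc, hact_mul, hact_ring]
  calc conv2 μ act (conv2 μ act ξ η) ζ (s, t) = ∫ r, ∫ u, F r u ∂μ ∂μ :=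
        integral_congr_ae (.of_forall fun r => conv2_apply_mul hact_cont hξc hξs hηc r t _)
    _ = ∫ u, ∫ r, F r u ∂μ ∂μ := integral_integral_swap_of_hasCompactSupport hFc hFs
    _ = ∫ u, ∫ r, F (u * r) u ∂μ ∂μ :=
        integral_congr_ae (.of_forall fun u => (integral_mul_left_eq_self (F · u) u).symm)
    _ = conv2 μ act ξ (conv2 μ act η ζ) (s, t) := by
        refine integral_congr_ae (.of_forall fun u => ?_)
        simp only [hF_shift]
        exact (mul_act_conv2_apply hact_cont hact_add hηc hηs hζc _ _ _ u).symm

end Convolution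

theorem stmt_1_general
    {G : Type*} [Group G] [TopologicalSpace G] [IsTopologicalGroup G]
    [MeasurableSpace G] [BorelSpace G]
    (μ : Measure G) [μ.IsHaarMeasure]
    {A : Type*} [NormedRing A] [NormedAlgebra ℂ A] [CompleteSpace A]
    -- `A` is a `G`-Banach algebra:
    (act : G → A → A)
    (hact_cont : Continuous fun p : G × A => act p.1 p.2)
    (hact_mul : ∀ g h a, act (g * h) a = act g (act h a))
    (hact_add : ∀ g a b, act g (a + b) = act g a + act g b)
    (hact_ring : ∀ g a b, act g (a * b) = act g a * act g b)
    (hact_isom : ∀ g a, ‖act g a‖ = ‖a‖)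
    -- `ξ, η, ζ ∈ C_c(G×G, A)`:
    (ξ η ζ : G × G → A)
    (hξc : Continuous ξ) (hξs : HasCompactSupport ξ)
    (hηc : Continuous η) (hηs : HasCompactSupport η)
    (hζc : Continuous ζ) :
    conv2 μ act (conv2 μ act ξ η) ζ = conv2 μ act ξ (conv2 μ act η ζ) ∧
    onenorm μ (conv2 μ act ξ η) ≤ onenorm μ ξ * onenorm μ η :=
  ⟨conv2_assoc hact_cont hact_mul hact_add hact_ring hξc hξs hηc hηs hζc,
    onenorm_conv2_le hact_isom hξc hξs hηc hηs⟩

/-- The convolution on `C_c(G×G, A)` is associative and satisfies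
`‖ξ * η‖₁ ≤ ‖ξ‖₁ ‖η‖₁`, so that `L¹(G⋉G, A)` is a Banach algebra. -/
theorem stmt_1
    {G : Type*} [Group G] [TopologicalSpace G] [IsTopologicalGroup G]
    [LocallyCompactSpace G] [T2Space G] [MeasurableSpace G] [BorelSpace G]
    (μ : Measure G) [μ.IsHaarMeasure]
    {A : Type*} [NormedRing A] [NormedAlgebra ℂ A] [CompleteSpace A]
    -- `A` is a `G`-Banach algebra:
    (act : G → A → A)
    (hact_cont : Continuous fun p : G × A => act p.1 p.2)
    (hact_one : ∀ a, act 1 a = a)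
    (hact_mul : ∀ g h a, act (g * h) a = act g (act h a))
    (hact_add : ∀ g a b, act g (a + b) = act g a + act g b)
    (hact_smul : ∀ g (c : ℂ) a, act g (c • a) = c • act g a)
    (hact_ring : ∀ g a b, act g (a * b) = act g a * act g b)
    (hact_isom : ∀ g a, ‖act g a‖ = ‖a‖)
    -- `ξ, η, ζ ∈ C_c(G×G, A)`:
    (ξ η ζ : G × G → A)
    (hξc : Continuous ξ) (hξs : HasCompactSupport ξ)
    (hηc : Continuous η) (hηs : HasCompactSupport η)
    (hζc : Continuous ζ) (hζs : HasCompactSupport ζ) :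
    conv2 μ act (conv2 μ act ξ η) ζ = conv2 μ act ξ (conv2 μ act η ζ) ∧
    onenorm μ (conv2 μ act ξ η) ≤ onenorm μ ξ * onenorm μ η :=
  stmt_1_general μ act hact_cont hact_mul hact_add hact_ring hact_isom ξ η ζ hξc hξs hηc hηs hζc
end

section
/- Let G be a locally compact Hausdorff group with left Haar measure μ and let A be a G-Banach algebra. Define, for r ∈ G and ξ ∈ C_c(G×G, A), (r·ξ)(s,t) := ξ(s, tr). Then: (i) this defines a left action of G on C_c(G×G,A), i.e. r·(r'·ξ) = (rr')·ξ and e·ξ = ξ; (ii) each map ξ ↦ r·ξ is isometric for ‖·‖₁, i.e. ‖r·ξ‖₁ = ‖ξ‖₁; (iii) each map ξ ↦ r·ξ is multiplicative for the convolution (ξ*η)(s,t) := ∫_G ξ(u,t)·(u·η(u⁻¹s,u⁻¹t)) dμ(u), i.e. r·(ξ*η) = (r·ξ)*(r·η); and (iv) for every ξ ∈ C_c(G×G,A), the map r ↦ r·ξ is continuous from G to (C_c(G×G,A), ‖·‖₁). (This is the content of the statement that L¹(G⋉G,A) is a G-Banach algebra.) -/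
open MeasureTheory Filter Topology

/-- The `G`-action `(r·ξ)(s,t) := ξ(s, tr)` on `C_c(G×G, A)`. -/
def tract {G A : Type*} [Group G] (r : G) (ξ : G × G → A) : G × G → A :=
  fun p => ξ (p.1, p.2 * r)

/-!
Parts (i)–(iii) are immediate from the definitions: the action only touches the second
variable, on which the convolution is left-equivariant, and translating `t` reindexes the
supremum defining `‖·‖₁`. For (iv), `ξ` is uniformly continuous for the left uniformity of
`G × G`, so `‖ξ(s, tr) - ξ(s, tr₀)‖` is uniformly small for `r` near `r₀`; since it vanishes
for `s` outside the compact projection `K` of the support of `ξ`, every integral defining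
`‖r·ξ - r₀·ξ‖₁` is at most that small bound times `μ K`.
-/

theorem HasCompactSupport.eventually_norm_sub_mul_right_lt {H E : Type*} [Group H]
    [TopologicalSpace H] [IsTopologicalGroup H] [SeminormedAddCommGroup E] {f : H → E}
    (hf : HasCompactSupport f) (hfc : Continuous f) {ε : ℝ} (hε : 0 < ε) :
    ∀ᶠ q in 𝓝 1, ∀ x, ‖f (x * q) - f x‖ < ε := by
  let := IsTopologicalGroup.leftUniformSpace H
  have hunif := uniformContinuous_iff_eventually.mp (hf.uniformContinuous_of_continuous hfc) _
    (Metric.dist_mem_uniformity hε)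
  rw [uniformity_eq_comap_nhds_one_left, eventually_comap] at hunif
  filter_upwards [hunif] with q hq x
  simpa [dist_eq_norm'] using hq (x, x * q) (inv_mul_cancel_left x q)

section Translation

variable {G A : Type*} [Group G]

theorem tract_tract (r r' : G) (ξ : G × G → A) : tract r (tract r' ξ) = tract (r * r') ξ := by
  funext p
  simp only [tract, mul_assoc]

theorem tract_one (ξ : G × G → A) : tract 1 ξ = ξ := by
  funext p
  simp only [tract, mul_one]

theorem onenorm_tract [MeasurableSpace G] [NormedAddCommGroup A] (μ : Measure G) (r : G)
    (ξ : G × G → A) : onenorm μ (tract r ξ) = onenorm μ ξ :=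
  (Equiv.mulRight r).iSup_comp (g := fun t => ∫ s, ‖ξ (s, t)‖ ∂μ)

theorem tract_conv2 [MeasurableSpace G] [NormedRing A] [NormedSpace ℝ A] (μ : Measure G)
    (act : G → A → A) (r : G) (ξ η : G × G → A) :
    tract r (conv2 μ act ξ η) = conv2 μ act (tract r ξ) (tract r η) := by
  funext p
  simp only [tract, conv2, mul_assoc]

end Translation

theorem onenorm_le_of_norm_le {G A : Type*} [MeasurableSpace G] [Nonempty G]
    [NormedAddCommGroup A] {μ : Measure G} {ξ : G × G → A} {K : Set G} {C : ℝ}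
    (hK : μ K < ⊤) (hξK : ∀ s t, s ∉ K → ξ (s, t) = 0) (hC : ∀ s t, ‖ξ (s, t)‖ ≤ C) :
    onenorm μ ξ ≤ C * μ.real K := by
  refine ciSup_le fun t => ?_
  rw [← setIntegral_eq_integral_of_forall_compl_eq_zero fun s hs => by simp [hξK s t hs]]
  calc ∫ s in K, ‖ξ (s, t)‖ ∂μ ≤ ‖∫ s in K, ‖ξ (s, t)‖ ∂μ‖ := Real.le_norm_self _
    _ ≤ C * μ.real K := norm_setIntegral_le_of_norm_le_const hK fun s _ => by simpa using hC s t

theorem eventually_onenorm_tract_sub_lt {G A : Type*} [Group G] [TopologicalSpace G]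
    [IsTopologicalGroup G] [MeasurableSpace G] [NormedAddCommGroup A] (μ : Measure G)
    [IsFiniteMeasureOnCompacts μ] {ξ : G × G → A} (hξc : Continuous ξ)
    (hξs : HasCompactSupport ξ) (r₀ : G) {ε : ℝ} (hε : 0 < ε) :
    ∀ᶠ r in 𝓝 r₀, onenorm μ (fun p => tract r ξ p - tract r₀ ξ p) < ε := by
  set K := Prod.fst '' tsupport ξ
  set c := μ.real K
  have hK : μ K < ⊤ := (hξs.image continuous_fst).measure_lt_top
  have hξK : ∀ s t, s ∉ K → ξ (s, t) = 0 := fun s t hs =>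
    image_eq_zero_of_notMem_tsupport fun h => hs ⟨(s, t), h, rfl⟩
  have hδ : 0 < ε / (c + 1) := by positivity
  have hδc : ε / (c + 1) * c < ε := by
    rw [div_mul_eq_mul_div, div_lt_iff₀ (by positivity)]
    nlinarith
  have hshift : Tendsto (fun r => ((1 : G), r₀⁻¹ * r)) (𝓝 r₀) (𝓝 1) := by
    have := ((continuous_const (y := (1 : G))).prodMk (continuous_const_mul r₀⁻¹)).tendsto r₀
    rwa [inv_mul_cancel, ← Prod.one_eq_mk] at this
  filter_upwards [hshift.eventually (hξs.eventually_norm_sub_mul_right_lt hξc hδ)] with r hr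
  have hclose : ∀ s t, ‖ξ (s, t * r) - ξ (s, t * r₀)‖ ≤ ε / (c + 1) := fun s t => by
    simpa [mul_assoc] using (hr (s, t * r₀)).le
  refine lt_of_le_of_lt (onenorm_le_of_norm_le hK (fun s t hs => ?_) hclose) hδc
  simp only [tract, hξK s _ hs, sub_self]

theorem stmt_2_general
    {G : Type*} [Group G] [TopologicalSpace G] [IsTopologicalGroup G]
    [MeasurableSpace G]
    (μ : Measure G) [μ.IsHaarMeasure]
    {A : Type*} [NormedRing A] [NormedAlgebra ℂ A]
    (act : G → A → A)
    -- `ξ, η ∈ C_c(G×G, A)`: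
    (ξ η : G × G → A)
    (hξc : Continuous ξ) (hξs : HasCompactSupport ξ) :
    -- (i) a left action:
    (∀ r r' : G, tract r (tract r' ξ) = tract (r * r') ξ) ∧
    tract (1 : G) ξ = ξ ∧
    -- (ii) isometric for `‖·‖₁`:
    (∀ r : G, onenorm μ (tract r ξ) = onenorm μ ξ) ∧
    -- (iii) multiplicative for the convolution:
    (∀ r : G, tract r (conv2 μ act ξ η) = conv2 μ act (tract r ξ) (tract r η)) ∧
    -- (iv) strongly continuous:
    (∀ r₀ : G, ∀ ε > (0 : ℝ), ∀ᶠ r in 𝓝 r₀,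
      onenorm μ (fun p : G × G => tract r ξ p - tract r₀ ξ p) < ε) :=
  ⟨fun r r' => tract_tract r r' ξ, tract_one ξ, fun r => onenorm_tract μ r ξ,
    fun r => tract_conv2 μ act r ξ η,
    fun r₀ _ hε => eventually_onenorm_tract_sub_lt μ hξc hξs r₀ hε⟩

/-- `(r·ξ)(s,t) := ξ(s,tr)` defines a left action of `G` on
`C_c(G×G,A)` which is isometric for `‖·‖₁`, multiplicative for the convolution, and
strongly continuous; this makes `L¹(G⋉G,A)` a `G`-Banach algebra. -/
theorem stmt_2
    {G : Type*} [Group G] [TopologicalSpace G] [IsTopologicalGroup G]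
    [LocallyCompactSpace G] [T2Space G] [MeasurableSpace G] [BorelSpace G]
    (μ : Measure G) [μ.IsHaarMeasure]
    {A : Type*} [NormedRing A] [NormedAlgebra ℂ A] [CompleteSpace A]
    -- `A` is a `G`-Banach algebra:
    (act : G → A → A)
    (hact_cont : Continuous fun p : G × A => act p.1 p.2)
    (hact_one : ∀ a, act 1 a = a)
    (hact_mul : ∀ g h a, act (g * h) a = act g (act h a))
    (hact_add : ∀ g a b, act g (a + b) = act g a + act g b)
    (hact_smul : ∀ g (c : ℂ) a, act g (c • a) = c • act g a)
    (hact_ring : ∀ g a b, act g (a * b) = act g a * act g b)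
    (hact_isom : ∀ g a, ‖act g a‖ = ‖a‖)
    -- `ξ, η ∈ C_c(G×G, A)`:
    (ξ η : G × G → A)
    (hξc : Continuous ξ) (hξs : HasCompactSupport ξ)
    (hηc : Continuous η) (hηs : HasCompactSupport η) :
    -- (i) a left action:
    (∀ r r' : G, tract r (tract r' ξ) = tract (r * r') ξ) ∧
    tract (1 : G) ξ = ξ ∧
    -- (ii) isometric for `‖·‖₁`:
    (∀ r : G, onenorm μ (tract r ξ) = onenorm μ ξ) ∧
    -- (iii) multiplicative for the convolution:
    (∀ r : G, tract r (conv2 μ act ξ η) = conv2 μ act (tract r ξ) (tract r η)) ∧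
    -- (iv) strongly continuous:
    (∀ r₀ : G, ∀ ε > (0 : ℝ), ∀ᶠ r in 𝓝 r₀,
      onenorm μ (fun p : G × G => tract r ξ p - tract r₀ ξ p) < ε) :=
  stmt_2_general μ act ξ η hξc hξs
end

section
/- Let G be a locally compact Hausdorff group with left Haar measure μ and let A be a G-Banach algebra. For ξ^<, ξ^> ∈ C_c(G, A) define ⟨ξ^<, ξ^>⟩_A := ∫_G ξ^<(r) · (r·ξ^>(r⁻¹)) dμ(r) ∈ A and the function ⟨ξ^>, ξ^<⟩_{L¹}(s,t) := ξ^>(t) · (t·ξ^<(t⁻¹s)) on G×G. Then: (i) ‖⟨ξ^<, ξ^>⟩_A‖ ≤ ‖ξ^<‖_{L¹} · ‖ξ^>‖_∞; (ii) ‖⟨ξ^>, ξ^<⟩_{L¹}‖₁ ≤ ‖ξ^>‖_∞ · ‖ξ^<‖_{L¹}; and (iii) with the G-actions (g·ξ^<)(s) := g·(ξ^<(g⁻¹s)) and (g·ξ^>)(t) := ξ^>(tg), the A-valued inner product is G-equivariant: ⟨g·ξ^<, g·ξ^>⟩_A = g·⟨ξ^<, ξ^>⟩_A for all g ∈ G.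 -/
/-!
Since `G` acts by isometries, `‖a * (g • b)‖ ≤ ‖a‖ ‖b‖`; integrating this pointwise bound gives
both norm estimates, after the substitution `s ↦ t s` (left invariance of `μ`) for the second.
Equivariance is the substitution `r ↦ g r`, after which the integrand is
`g • (ξ^<(r) (r • ξ^>(r⁻¹)))` and the linear isometry `a ↦ g • a` commutes with the Bochner integral.
-/

open MeasureTheory

section GBanachAlgebra

variable {G : Type*} {A : Type*} [NormedRing A] (act : G → A → A)

theorem norm_mul_act_le (hact_isom : ∀ g a, ‖act g a‖ = ‖a‖) (a b : A) (g : G) :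
    ‖a * act g b‖ ≤ ‖a‖ * ‖b‖ :=
  (norm_mul_le _ _).trans_eq (by rw [hact_isom])

variable [Group G] [MeasurableSpace G]

theorem norm_integral_mul_act_inv_le [NormedSpace ℝ A] (hact_isom : ∀ g a, ‖act g a‖ = ‖a‖)
    (μ : Measure G) {ξl ξr : G → A} (hξl : Integrable ξl μ)
    (hξr : BddAbove (Set.range fun s => ‖ξr s‖)) :
    ‖∫ r, ξl r * act r (ξr r⁻¹) ∂μ‖ ≤ (∫ s, ‖ξl s‖ ∂μ) * ⨆ s, ‖ξr s‖ := by
  rw [← integral_mul_const]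
  refine norm_integral_le_of_norm_le (hξl.norm.mul_const _) (.of_forall fun r => ?_)
  exact (norm_mul_act_le act hact_isom _ _ _).trans
    (mul_le_mul_of_nonneg_left (le_ciSup hξr _) (norm_nonneg _))

variable [MeasurableMul G]

theorem integral_norm_mul_act_translate_le (hact_isom : ∀ g a, ‖act g a‖ = ‖a‖)
    (μ : Measure G) [μ.IsMulLeftInvariant] {ξ : G → A} (hξ : Integrable ξ μ) (a : A) (t : G) :
    ∫ s, ‖a * act t (ξ (t⁻¹ * s))‖ ∂μ ≤ ‖a‖ * ∫ s, ‖ξ s‖ ∂μ := by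
  rw [← integral_mul_left_eq_self _ t, ← integral_const_mul]
  refine integral_mono_of_nonneg (.of_forall fun _ => norm_nonneg _) (hξ.norm.const_mul _)
    (.of_forall fun s => ?_)
  simpa only [inv_mul_cancel_left] using norm_mul_act_le act hact_isom a (ξ s) t

theorem iSup_integral_norm_mul_act_translate_le (hact_isom : ∀ g a, ‖act g a‖ = ‖a‖)
    (μ : Measure G) [μ.IsMulLeftInvariant] {ξl ξr : G → A} (hξl : Integrable ξl μ)
    (hξr : BddAbove (Set.range fun s => ‖ξr s‖)) :
    (⨆ t, ∫ s, ‖ξr t * act t (ξl (t⁻¹ * s))‖ ∂μ) ≤ (⨆ s, ‖ξr s‖) * ∫ s, ‖ξl s‖ ∂μ :=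
  ciSup_le fun t => (integral_norm_mul_act_translate_le act hact_isom μ hξl _ t).trans
    (mul_le_mul_of_nonneg_right (le_ciSup hξr t) (integral_nonneg fun _ => norm_nonneg _))

variable [NormedAlgebra ℂ A]

def actLinearIsometry (hact_add : ∀ g a b, act g (a + b) = act g a + act g b)
    (hact_smul : ∀ g (c : ℂ) a, act g (c • a) = c • act g a)
    (hact_isom : ∀ g a, ‖act g a‖ = ‖a‖) (g : G) : A →ₗᵢ[ℂ] A where
  toFun := act g
  map_add' := hact_add g
  map_smul' := hact_smul g
  norm_map' := hact_isom g

variable [CompleteSpace A]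

theorem integral_act_translate_mul_act_eq
    (hact_mul : ∀ g h a, act (g * h) a = act g (act h a))
    (hact_add : ∀ g a b, act g (a + b) = act g a + act g b)
    (hact_smul : ∀ g (c : ℂ) a, act g (c • a) = c • act g a)
    (hact_ring : ∀ g a b, act g (a * b) = act g a * act g b)
    (hact_isom : ∀ g a, ‖act g a‖ = ‖a‖)
    (μ : Measure G) [μ.IsMulLeftInvariant] (ξl ξr : G → A) (g : G) :
    ∫ r, act g (ξl (g⁻¹ * r)) * act r (ξr (r⁻¹ * g)) ∂μ
      = act g (∫ r, ξl r * act r (ξr r⁻¹) ∂μ) := by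
  rw [← integral_mul_left_eq_self _ g]
  refine (integral_congr_ae (.of_forall fun r => ?_)).trans
    ((actLinearIsometry act hact_add hact_smul hact_isom g).integral_comp_comm _)
  simp only [actLinearIsometry, LinearIsometry.coe_mk, LinearMap.coe_mk, AddHom.coe_mk,
    inv_mul_cancel_left, mul_inv_rev, inv_mul_cancel_right, hact_mul, hact_ring]

end GBanachAlgebra

theorem stmt_3_general
    {G : Type*} [Group G] [TopologicalSpace G] [IsTopologicalGroup G]
    [MeasurableSpace G] [BorelSpace G]
    (μ : Measure G) [μ.IsHaarMeasure]
    {A : Type*} [NormedRing A] [NormedAlgebra ℂ A] [CompleteSpace A]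
    -- `A` is a `G`-Banach algebra:
    (act : G → A → A)
    (hact_mul : ∀ g h a, act (g * h) a = act g (act h a))
    (hact_add : ∀ g a b, act g (a + b) = act g a + act g b)
    (hact_smul : ∀ g (c : ℂ) a, act g (c • a) = c • act g a)
    (hact_ring : ∀ g a b, act g (a * b) = act g a * act g b)
    (hact_isom : ∀ g a, ‖act g a‖ = ‖a‖)
    -- `ξ^<, ξ^> ∈ C_c(G, A)`:
    (ξl ξr : G → A)
    (hξlc : Continuous ξl) (hξls : HasCompactSupport ξl)
    (hξrc : Continuous ξr) (hξrs : HasCompactSupport ξr) :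
    -- (i) `‖⟨ξ^<, ξ^>⟩_A‖ ≤ ‖ξ^<‖_{L¹} ‖ξ^>‖_∞`:
    ‖∫ r, ξl r * act r (ξr r⁻¹) ∂μ‖ ≤ (∫ s, ‖ξl s‖ ∂μ) * (⨆ s : G, ‖ξr s‖) ∧
    -- (ii) `‖⟨ξ^>, ξ^<⟩_{L¹}‖₁ ≤ ‖ξ^>‖_∞ ‖ξ^<‖_{L¹}`:
    (⨆ t : G, ∫ s, ‖ξr t * act t (ξl (t⁻¹ * s))‖ ∂μ)
      ≤ (⨆ s : G, ‖ξr s‖) * (∫ s, ‖ξl s‖ ∂μ) ∧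
    -- (iii) equivariance of the `A`-valued inner product:
    (∀ g : G,
      ∫ r, (act g (ξl (g⁻¹ * r))) * act r (ξr (r⁻¹ * g)) ∂μ
        = act g (∫ r, ξl r * act r (ξr r⁻¹) ∂μ)) := by
  have hξl : Integrable ξl μ := hξlc.integrable_of_hasCompactSupport hξls
  have hξr : BddAbove (Set.range fun s => ‖ξr s‖) :=
    hξrc.norm.bddAbove_range_of_hasCompactSupport hξrs.norm
  exact ⟨norm_integral_mul_act_inv_le act hact_isom μ hξl hξr,
    iSup_integral_norm_mul_act_translate_le act hact_isom μ hξl hξr,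
    integral_act_translate_mul_act_eq act hact_mul hact_add hact_smul hact_ring hact_isom μ ξl ξr⟩

/-- Norm estimates and `G`-equivariance of the inner products of the
Morita equivalence `(L¹(G,A), C₀(G,A))` between `L¹(G⋉G,A)` and `A`. -/
theorem stmt_3
    {G : Type*} [Group G] [TopologicalSpace G] [IsTopologicalGroup G]
    [LocallyCompactSpace G] [T2Space G] [MeasurableSpace G] [BorelSpace G]
    (μ : Measure G) [μ.IsHaarMeasure]
    {A : Type*} [NormedRing A] [NormedAlgebra ℂ A] [CompleteSpace A]
    -- `A` is a `G`-Banach algebra: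
    (act : G → A → A)
    (hact_cont : Continuous fun p : G × A => act p.1 p.2)
    (hact_one : ∀ a, act 1 a = a)
    (hact_mul : ∀ g h a, act (g * h) a = act g (act h a))
    (hact_add : ∀ g a b, act g (a + b) = act g a + act g b)
    (hact_smul : ∀ g (c : ℂ) a, act g (c • a) = c • act g a)
    (hact_ring : ∀ g a b, act g (a * b) = act g a * act g b)
    (hact_isom : ∀ g a, ‖act g a‖ = ‖a‖)
    -- `ξ^<, ξ^> ∈ C_c(G, A)`:
    (ξl ξr : G → A)
    (hξlc : Continuous ξl) (hξls : HasCompactSupport ξl)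
    (hξrc : Continuous ξr) (hξrs : HasCompactSupport ξr) :
    -- (i) `‖⟨ξ^<, ξ^>⟩_A‖ ≤ ‖ξ^<‖_{L¹} ‖ξ^>‖_∞`:
    ‖∫ r, ξl r * act r (ξr r⁻¹) ∂μ‖ ≤ (∫ s, ‖ξl s‖ ∂μ) * (⨆ s : G, ‖ξr s‖) ∧
    -- (ii) `‖⟨ξ^>, ξ^<⟩_{L¹}‖₁ ≤ ‖ξ^>‖_∞ ‖ξ^<‖_{L¹}`:
    (⨆ t : G, ∫ s, ‖ξr t * act t (ξl (t⁻¹ * s))‖ ∂μ)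
      ≤ (⨆ s : G, ‖ξr s‖) * (∫ s, ‖ξl s‖ ∂μ) ∧
    -- (iii) equivariance of the `A`-valued inner product:
    (∀ g : G,
      ∫ r, (act g (ξl (g⁻¹ * r))) * act r (ξr (r⁻¹ * g)) ∂μ
        = act g (∫ r, ξl r * act r (ξr r⁻¹) ∂μ)) :=
  stmt_3_general μ act hact_mul hact_add hact_smul hact_ring hact_isom ξl ξr hξlc hξls hξrc hξrs
end

section
/- Let G be a locally compact Hausdorff group with left Haar measure μ and let A be a G-Banach algebra. For ξ^>, η^>, ξ^< ∈ C_c(G, A), define ⟨ξ^<, η^>⟩_A := ∫_G ξ^<(r)·(r·η^>(r⁻¹)) dμ(r) ∈ A, the function ⟨ξ^>, ξ^<⟩_{L¹}(s,t) := ξ^>(t)·(t·ξ^<(t⁻¹s)) in C_c(G×G,A), the left module action (α·η^>)(t) := ∫_G α(r,t)·(r·η^>(r⁻¹t)) dμ(r) for α ∈ C_c(G×G,A), and the right action (ξ^>·a)(t) := ξ^>(t)·(t·a) for a ∈ A. Then the inner products and module actions are compatible: ⟨ξ^>, ξ^<⟩_{L¹} · η^> = ξ^> · ⟨ξ^<,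 η^>⟩_A as elements of C_c(G,A). -/
open MeasureTheory

/-!
Substituting `r ↦ t * r` (left invariance of `μ`) turns the integrand on the left into
`ξ^>(t) · t·(ξ^<(r) · r·η^>(r⁻¹))`, because `t·a · (t r)·b = t·(a · r·b)`. The map
`a ↦ ξ^>(t) · t·a` is additive and continuous, hence commutes with the Bochner integral.
-/

theorem AddMonoidHom.integral_comp_comm {X E F : Type*} [MeasurableSpace X] {μ : Measure X}
    [NormedAddCommGroup E] [NormedSpace ℝ E] [CompleteSpace E]
    [NormedAddCommGroup F] [NormedSpace ℝ F] [CompleteSpace F]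
    (φ : E →+ F) (hφ : Continuous φ) {f : X → E} (hf : Integrable f μ) :
    ∫ x, φ (f x) ∂μ = φ (∫ x, f x ∂μ) :=
  (φ.toRealLinearMap hφ).integral_comp_comm hf

theorem act_mul_act_mul_left {G A : Type*} [Mul G] [Mul A] {act : G → A → A}
    (hact_mul : ∀ g h a, act (g * h) a = act g (act h a))
    (hact_ring : ∀ g a b, act g (a * b) = act g a * act g b) (t r : G) (a b : A) :
    act t a * act (t * r) b = act t (a * act r b) := by
  rw [hact_mul, hact_ring]

theorem stmt_4_general
    {G : Type*} [Group G] [TopologicalSpace G] [IsTopologicalGroup G]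
    [MeasurableSpace G] [BorelSpace G]
    (μ : Measure G) [μ.IsHaarMeasure]
    {A : Type*} [NormedRing A] [NormedAlgebra ℂ A] [CompleteSpace A]
    -- `A` is a `G`-Banach algebra:
    (act : G → A → A)
    (hact_cont : Continuous fun p : G × A => act p.1 p.2)
    (hact_mul : ∀ g h a, act (g * h) a = act g (act h a))
    (hact_add : ∀ g a b, act g (a + b) = act g a + act g b)
    (hact_ring : ∀ g a b, act g (a * b) = act g a * act g b)
    -- `ξ^>, η^>, ξ^< ∈ C_c(G, A)`:
    (ξr ηr ξl : G → A)
    (hηrc : Continuous ηr)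
    (hξlc : Continuous ξl) (hξls : HasCompactSupport ξl) :
    -- `⟨ξ^>, ξ^<⟩_{L¹} · η^> = ξ^> · ⟨ξ^<, η^>⟩_A` in `C_c(G, A)`:
    (fun t : G => ∫ r, (ξr t * act t (ξl (t⁻¹ * r))) * act r (ηr (r⁻¹ * t)) ∂μ)
      = fun t : G => ξr t * act t (∫ r, ξl r * act r (ηr r⁻¹) ∂μ) := by
  funext t
  have hint : Integrable (fun r => ξl r * act r (ηr r⁻¹)) μ :=
    (hξlc.mul (hact_cont.comp (continuous_id.prodMk (hηrc.comp continuous_inv))))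
      |>.integrable_of_hasCompactSupport hξls.mul_right
  let φ : A →+ A := (AddMonoidHom.mulLeft (ξr t)).comp (AddMonoidHom.mk' (act t) (hact_add t))
  have hφ : Continuous φ :=
    continuous_const.mul (hact_cont.comp (continuous_const.prodMk continuous_id))
  calc (∫ r, (ξr t * act t (ξl (t⁻¹ * r))) * act r (ηr (r⁻¹ * t)) ∂μ)
      = ∫ r, (ξr t * act t (ξl (t⁻¹ * (t * r)))) * act (t * r) (ηr ((t * r)⁻¹ * t)) ∂μ :=
        (integral_mul_left_eq_self _ t).symm
    _ = ∫ r, φ (ξl r * act r (ηr r⁻¹)) ∂μ := by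
        simp only [inv_mul_cancel_left, mul_inv_rev, mul_assoc, inv_mul_cancel, mul_one,
          act_mul_act_mul_left hact_mul hact_ring]
        rfl
    _ = ξr t * act t (∫ r, ξl r * act r (ηr r⁻¹) ∂μ) := φ.integral_comp_comm hφ hint

/-- Compatibility of the two inner products of the Morita equivalence
`(L¹(G,A), C₀(G,A))`: `⟨ξ^>, ξ^<⟩_{L¹} · η^> = ξ^> · ⟨ξ^<, η^>⟩_A`. -/
theorem stmt_4
    {G : Type*} [Group G] [TopologicalSpace G] [IsTopologicalGroup G]
    [LocallyCompactSpace G] [T2Space G] [MeasurableSpace G] [BorelSpace G]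
    (μ : Measure G) [μ.IsHaarMeasure]
    {A : Type*} [NormedRing A] [NormedAlgebra ℂ A] [CompleteSpace A]
    -- `A` is a `G`-Banach algebra:
    (act : G → A → A)
    (hact_cont : Continuous fun p : G × A => act p.1 p.2)
    (hact_one : ∀ a, act 1 a = a)
    (hact_mul : ∀ g h a, act (g * h) a = act g (act h a))
    (hact_add : ∀ g a b, act g (a + b) = act g a + act g b)
    (hact_smul : ∀ g (c : ℂ) a, act g (c • a) = c • act g a)
    (hact_ring : ∀ g a b, act g (a * b) = act g a * act g b)
    (hact_isom : ∀ g a, ‖act g a‖ = ‖a‖)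
    -- `ξ^>, η^>, ξ^< ∈ C_c(G, A)`:
    (ξr ηr ξl : G → A)
    (hξrc : Continuous ξr) (hξrs : HasCompactSupport ξr)
    (hηrc : Continuous ηr) (hηrs : HasCompactSupport ηr)
    (hξlc : Continuous ξl) (hξls : HasCompactSupport ξl) :
    -- `⟨ξ^>, ξ^<⟩_{L¹} · η^> = ξ^> · ⟨ξ^<, η^>⟩_A` in `C_c(G, A)`:
    (fun t : G => ∫ r, (ξr t * act t (ξl (t⁻¹ * r))) * act r (ηr (r⁻¹ * t)) ∂μ)
      = fun t : G => ξr t * act t (∫ r, ξl r * act r (ηr r⁻¹) ∂μ) :=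
  stmt_4_general μ act hact_cont hact_mul hact_add hact_ring ξr ηr ξl hηrc hξlc hξls
end

section
/- Let G be a locally compact Hausdorff group with left Haar measure μ and let A be a G-Banach algebra. For α, α' ∈ C_c(G×G, A) and ξ^> ∈ C_c(G, A), define the convolution (α * α')(s,t) := ∫_G α(r,t)·(r·α'(r⁻¹s, r⁻¹t)) dμ(r) and the left module action (α · ξ^>)(t) := ∫_G α(r,t)·(r·ξ^>(r⁻¹t)) dμ(r). Then: (i) (α * α') · ξ^> = α · (α' · ξ^>); (ii) ‖α · ξ^>‖_∞ ≤ ‖α‖₁ · ‖ξ^>‖_∞; and (iii) the action is G-equivariant: with (g·α)(s,t) := α(s,tg) and (g·ξ^>)(t) := ξ^>(tg), one has g·(α · ξ^>) = (g·α) · (g·ξ^>) for all g ∈ G. -/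
open MeasureTheory

/-- The left module action `(α · ξ^>)(t) := ∫ α(r,t)·(r·ξ^>(r⁻¹t)) dμ(r)` of
`C_c(G×G,A)` on `C_c(G,A) ⊆ C₀(G,A)`. -/
noncomputable def lact {G A : Type*} [Group G] [MeasurableSpace G]
    [NormedRing A] [NormedSpace ℝ A]
    (μ : Measure G) (act : G → A → A) (α : G × G → A) (ξ : G → A) : G → A :=
  fun t => ∫ r, α (r, t) * act r (ξ (r⁻¹ * t)) ∂μ

/-!
Associativity is Fubini's theorem followed by the left translation `s ↦ r * s` of the inner
variable, which turns `r·α'(r⁻¹s, r⁻¹t) · s·ξ(s⁻¹t)` into `r·(α'(u, r⁻¹t) · u·ξ(u⁻¹r⁻¹t))`; the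
outer `r·` then leaves the integral because a continuous additive map is `ℝ`-linear. Fubini
applies since for fixed `t` the integrand is continuous and vanishes unless `r` lies in the
projection of `supp α` and `s⁻¹t ∈ supp ξ`. The norm bound is the triangle inequality for the
integral together with the isometry of the action, and equivariance is `r⁻¹(tg) = (r⁻¹t)g`.
-/

open Function Set

section CompactSupport

variable {X Y M : Type*} [TopologicalSpace X] [TopologicalSpace Y]

theorem HasCompactSupport.comp_prodMk_left [Zero M] {f : X × Y → M} (hf : HasCompactSupport f)
    (y : Y) : HasCompactSupport fun x => f (x, y) := by
  have hclosed : IsClosed ((·, y) ⁻¹' tsupport f) :=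
    (isClosed_tsupport f).preimage (Continuous.prodMk_left y)
  exact .intro' ((hf.image continuous_fst).of_isClosed_subset hclosed fun x hx => ⟨_, hx, rfl⟩)
    hclosed fun _ hx => image_eq_zero_of_notMem_tsupport hx

theorem hasCompactSupport_mul_mul_of_snd_of_fst [MulZeroClass M] {a : Y → M} {b : X × Y → M}
    {c : X → M} (ha : HasCompactSupport a) (hc : HasCompactSupport c) :
    HasCompactSupport fun p : X × Y => a p.2 * b p * c p.1 := by
  refine .intro' (hc.prod ha) ((isClosed_tsupport c).prod (isClosed_tsupport a)) fun p hp => ?_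
  rcases not_and_or.mp hp with h | h
  · rw [image_eq_zero_of_notMem_tsupport h, mul_zero]
  · rw [image_eq_zero_of_notMem_tsupport h, zero_mul, zero_mul]

end CompactSupport

section Slices

variable {X Y A : Type*} [TopologicalSpace X] [TopologicalSpace Y] [MeasurableSpace X]
  {μ : Measure X} [IsFiniteMeasureOnCompacts μ] [NormedRing A]

theorem integrable_slice_mul [OpensMeasurableSpace X] {β : X × Y → A} (hβc : Continuous β)
    (hβs : HasCompactSupport β) (y : Y) {h : X → A} (hh : Continuous h) :
    Integrable (fun x => β (x, y) * h x) μ :=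
  ((hβc.comp (.prodMk_left y)).mul hh).integrable_of_hasCompactSupport
    (hβs.comp_prodMk_left y).mul_right

theorem bddAbove_integral_norm_slice {β : X × Y → A} (hβc : Continuous β)
    (hβs : HasCompactSupport β) : BddAbove (range fun y => ∫ x, ‖β (x, y)‖ ∂μ) := by
  obtain ⟨C, hC⟩ := hβc.norm.bddAbove_range_of_hasCompactSupport hβs.norm
  set K := Prod.fst '' tsupport β
  have hK : IsCompact K := hβs.image continuous_fst
  have hβK (y : Y) : ∀ x ∉ K, ‖β (x, y)‖ = 0 := fun x hx => by
    rw [image_eq_zero_of_notMem_tsupport fun h => hx ⟨_, h, rfl⟩, norm_zero]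
  refine ⟨C * μ.real K, ?_⟩
  rintro _ ⟨y, rfl⟩
  calc ∫ x, ‖β (x, y)‖ ∂μ = ∫ x in K, ‖β (x, y)‖ ∂μ :=
        (setIntegral_eq_integral_of_forall_compl_eq_zero (hβK y)).symm
    _ ≤ C * μ.real K := (Real.le_norm_self _).trans <|
        norm_setIntegral_le_of_norm_le_const hK.measure_lt_top
          fun x _ => (norm_norm (β (x, y))).trans_le (hC ⟨(x, y), rfl⟩)

end Slices

section Action

variable {G A X : Type*} [TopologicalSpace G] {act : G → A → A}

theorem continuous_act_comp [TopologicalSpace A] [TopologicalSpace X]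
    (hact_cont : Continuous fun p : G × A => act p.1 p.2) {g : X → G} {f : X → A}
    (hg : Continuous g) (hf : Continuous f) : Continuous fun x => act (g x) (f x) :=
  hact_cont.comp (hg.prodMk hf)

theorem integral_const_mul_act [MeasurableSpace X] [NormedRing A] [NormedAlgebra ℝ A]
    [CompleteSpace A] {ν : Measure X} (hact_cont : Continuous fun p : G × A => act p.1 p.2)
    (hact_add : ∀ g a b, act g (a + b) = act g a + act g b) (c : A) (g : G) {f : X → A}
    (hf : Integrable f ν) : ∫ x, c * act g (f x) ∂ν = c * act g (∫ x, f x ∂ν) := by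
  let L : A →L[ℝ] A :=
    (AddMonoidHom.mk' (act g) (hact_add g)).toRealLinearMap (hact_cont.comp (.prodMk_right g))
  change ∫ x, c * L (f x) ∂ν = c * L (∫ x, f x ∂ν)
  rw [integral_const_mul_of_integrable (L.integrable_comp hf), L.integral_comp_comm hf]

end Action

section ModuleAction

variable {G A : Type*} [Group G] [MeasurableSpace G] {μ : Measure G} [NormedRing A]
  {act : G → A → A}

theorem lact_comp_mul_right [NormedSpace ℝ A] (α : G × G → A) (ξ : G → A) (g : G) :
    (fun t => lact μ act α ξ (t * g))
      = lact μ act (fun p => α (p.1, p.2 * g)) (fun t => ξ (t * g)) := by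
  funext t
  simp only [lact, mul_assoc]

theorem norm_lact_le [NormedSpace ℝ A] (hact_isom : ∀ g a, ‖act g a‖ = ‖a‖) {α : G × G → A}
    {ξ : G → A} {t : G} {C : ℝ} (hα : Integrable (fun s => α (s, t)) μ) (hξ : ∀ t, ‖ξ t‖ ≤ C) :
    ‖lact μ act α ξ t‖ ≤ (∫ s, ‖α (s, t)‖ ∂μ) * C := by
  rw [← integral_mul_const]
  refine norm_integral_le_of_norm_le (hα.norm.mul_const C) (.of_forall fun r => ?_)
  calc ‖α (r, t) * act r (ξ (r⁻¹ * t))‖ ≤ ‖α (r, t)‖ * ‖act r (ξ (r⁻¹ * t))‖ := norm_mul_le _ _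
    _ ≤ ‖α (r, t)‖ * C := by rw [hact_isom]; gcongr; exact hξ _

theorem iSup_norm_lact_le [NormedSpace ℝ A] (hact_isom : ∀ g a, ‖act g a‖ = ‖a‖)
    {α : G × G → A} {ξ : G → A} (hα : ∀ t, Integrable (fun s => α (s, t)) μ)
    (hαb : BddAbove (range fun t => ∫ s, ‖α (s, t)‖ ∂μ)) (hξ : BddAbove (range fun t => ‖ξ t‖)) :
    (⨆ t, ‖lact μ act α ξ t‖) ≤ onenorm μ α * ⨆ t, ‖ξ t‖ :=
  ciSup_le fun t => (norm_lact_le hact_isom (hα t) fun s => le_ciSup hξ s).trans <|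
    mul_le_mul_of_nonneg_right (le_ciSup hαb t) ((norm_nonneg _).trans (le_ciSup hξ 1))

variable [TopologicalSpace G] [IsTopologicalGroup G] [BorelSpace G] [μ.IsMulLeftInvariant]
  [IsFiniteMeasureOnCompacts μ] [NormedAlgebra ℝ A] [CompleteSpace A]

theorem integral_mul_act_mul_act_eq_lact (hact_cont : Continuous fun p : G × A => act p.1 p.2)
    (hact_mul : ∀ g h a, act (g * h) a = act g (act h a))
    (hact_add : ∀ g a b, act g (a + b) = act g a + act g b)
    (hact_ring : ∀ g a b, act g (a * b) = act g a * act g b)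
    {α' : G × G → A} {ξ : G → A} (hα'c : Continuous α') (hα's : HasCompactSupport α')
    (hξc : Continuous ξ) (c : A) (r t : G) :
    ∫ s, c * act r (α' (r⁻¹ * s, r⁻¹ * t)) * act s (ξ (s⁻¹ * t)) ∂μ
      = c * act r (lact μ act α' ξ (r⁻¹ * t)) := by
  rw [← integral_mul_left_eq_self _ r]
  simp only [inv_mul_cancel_left, mul_inv_rev, hact_mul, mul_assoc, ← hact_ring]
  exact integral_const_mul_act hact_cont hact_add c r <| integrable_slice_mul hα'c hα's _ <|
    continuous_act_comp hact_cont continuous_id (hξc.comp (continuous_inv.mul continuous_const))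

theorem lact_conv2 (hact_cont : Continuous fun p : G × A => act p.1 p.2)
    (hact_mul : ∀ g h a, act (g * h) a = act g (act h a))
    (hact_add : ∀ g a b, act g (a + b) = act g a + act g b)
    (hact_ring : ∀ g a b, act g (a * b) = act g a * act g b)
    {α α' : G × G → A} {ξ : G → A} (hαc : Continuous α) (hαs : HasCompactSupport α)
    (hα'c : Continuous α') (hα's : HasCompactSupport α')
    (hξc : Continuous ξ) (hξs : HasCompactSupport ξ) :
    lact μ act (conv2 μ act α α') ξ = lact μ act α (lact μ act α' ξ) := by
  funext t
  let F : G → G → A := fun s r =>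
    α (r, t) * act r (α' (r⁻¹ * s, r⁻¹ * t)) * act s (ξ (s⁻¹ * t))
  have hinner (s : G) : conv2 μ act α α' (s, t) * act s (ξ (s⁻¹ * t)) = ∫ r, F s r ∂μ :=
    (integral_mul_const_of_integrable <| integrable_slice_mul hαc hαs t <|
      continuous_act_comp hact_cont continuous_id (hα'c.comp (by fun_prop))).symm
  have hF_cont : Continuous (uncurry F) :=
    ((hαc.comp (by fun_prop)).mul
      (continuous_act_comp hact_cont continuous_snd (hα'c.comp (by fun_prop)))).mul
      (continuous_act_comp hact_cont continuous_fst (hξc.comp (by fun_prop)))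
  have hξt : HasCompactSupport fun s => act s (ξ (s⁻¹ * t)) :=
    (hξs.comp_homeomorph ((Homeomorph.inv G).trans (Homeomorph.mulRight t))).mono
      fun s hs h0 => hs <| by
        change act s (ξ (s⁻¹ * t)) = 0
        rw [show ξ (s⁻¹ * t) = 0 from h0]
        exact (AddMonoidHom.mk' (act s) (hact_add s)).map_zero
  have hF_supp : HasCompactSupport (uncurry F) :=
    (hasCompactSupport_mul_mul_of_snd_of_fst (hαs.comp_prodMk_left t) hξt :)
  calc lact μ act (conv2 μ act α α') ξ t = ∫ s, ∫ r, F s r ∂μ ∂μ :=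
        integral_congr_ae (.of_forall hinner)
    _ = ∫ r, ∫ s, F s r ∂μ ∂μ := integral_integral_swap_of_hasCompactSupport hF_cont hF_supp
    _ = lact μ act α (lact μ act α' ξ) t := integral_congr_ae <| .of_forall fun r =>
        integral_mul_act_mul_act_eq_lact hact_cont hact_mul hact_add hact_ring hα'c hα's hξc _ r t

end ModuleAction

theorem stmt_6_general
    {G : Type*} [Group G] [TopologicalSpace G] [IsTopologicalGroup G]
    [MeasurableSpace G] [BorelSpace G]
    (μ : Measure G) [μ.IsHaarMeasure]
    {A : Type*} [NormedRing A] [NormedAlgebra ℂ A] [CompleteSpace A]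
    -- `A` is a `G`-Banach algebra:
    (act : G → A → A)
    (hact_cont : Continuous fun p : G × A => act p.1 p.2)
    (hact_mul : ∀ g h a, act (g * h) a = act g (act h a))
    (hact_add : ∀ g a b, act g (a + b) = act g a + act g b)
    (hact_ring : ∀ g a b, act g (a * b) = act g a * act g b)
    (hact_isom : ∀ g a, ‖act g a‖ = ‖a‖)
    -- `α, α' ∈ C_c(G×G, A)` and `ξ^> ∈ C_c(G, A)`:
    (α α' : G × G → A) (ξr : G → A)
    (hαc : Continuous α) (hαs : HasCompactSupport α)
    (hα'c : Continuous α') (hα's : HasCompactSupport α')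
    (hξrc : Continuous ξr) (hξrs : HasCompactSupport ξr) :
    -- (i) associativity over convolution:
    lact μ act (conv2 μ act α α') ξr = lact μ act α (lact μ act α' ξr) ∧
    -- (ii) `‖α · ξ^>‖_∞ ≤ ‖α‖₁ ‖ξ^>‖_∞`:
    (⨆ t : G, ‖lact μ act α ξr t‖) ≤ onenorm μ α * (⨆ t : G, ‖ξr t‖) ∧
    -- (iii) `G`-equivariance: `g·(α · ξ^>) = (g·α) · (g·ξ^>)`:
    (∀ g : G, (fun t : G => lact μ act α ξr (t * g))
        = lact μ act (fun p : G × G => α (p.1, p.2 * g)) (fun t : G => ξr (t * g))) :=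
  ⟨lact_conv2 hact_cont hact_mul hact_add hact_ring hαc hαs hα'c hα's hξrc hξrs,
    iSup_norm_lact_le hact_isom
      (fun t =>
        (hαc.comp (.prodMk_left t)).integrable_of_hasCompactSupport (hαs.comp_prodMk_left t))
      (bddAbove_integral_norm_slice hαc hαs)
      (hξrc.norm.bddAbove_range_of_hasCompactSupport hξrs.norm),
    lact_comp_mul_right α ξr⟩

/-- `C₀(G,A)` is a `G`-equivariant left Banach module over
`L¹(G⋉G,A)`: the action is associative over the convolution, contractive for the
relevant norms, and `G`-equivariant. -/
theorem stmt_6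
    {G : Type*} [Group G] [TopologicalSpace G] [IsTopologicalGroup G]
    [LocallyCompactSpace G] [T2Space G] [MeasurableSpace G] [BorelSpace G]
    (μ : Measure G) [μ.IsHaarMeasure]
    {A : Type*} [NormedRing A] [NormedAlgebra ℂ A] [CompleteSpace A]
    -- `A` is a `G`-Banach algebra:
    (act : G → A → A)
    (hact_cont : Continuous fun p : G × A => act p.1 p.2)
    (hact_one : ∀ a, act 1 a = a)
    (hact_mul : ∀ g h a, act (g * h) a = act g (act h a))
    (hact_add : ∀ g a b, act g (a + b) = act g a + act g b)
    (hact_smul : ∀ g (c : ℂ) a, act g (c • a) = c • act g a)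
    (hact_ring : ∀ g a b, act g (a * b) = act g a * act g b)
    (hact_isom : ∀ g a, ‖act g a‖ = ‖a‖)
    -- `α, α' ∈ C_c(G×G, A)` and `ξ^> ∈ C_c(G, A)`:
    (α α' : G × G → A) (ξr : G → A)
    (hαc : Continuous α) (hαs : HasCompactSupport α)
    (hα'c : Continuous α') (hα's : HasCompactSupport α')
    (hξrc : Continuous ξr) (hξrs : HasCompactSupport ξr) :
    -- (i) associativity over convolution:
    lact μ act (conv2 μ act α α') ξr = lact μ act α (lact μ act α' ξr) ∧
    -- (ii) `‖α · ξ^>‖_∞ ≤ ‖α‖₁ ‖ξ^>‖_∞`: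
    (⨆ t : G, ‖lact μ act α ξr t‖) ≤ onenorm μ α * (⨆ t : G, ‖ξr t‖) ∧
    -- (iii) `G`-equivariance: `g·(α · ξ^>) = (g·α) · (g·ξ^>)`:
    (∀ g : G, (fun t : G => lact μ act α ξr (t * g))
        = lact μ act (fun p : G × G => α (p.1, p.2 * g)) (fun t : G => ξr (t * g))) :=
  stmt_6_general μ act hact_cont hact_mul hact_add hact_ring hact_isom α α' ξr hαc hαs hα'c hα's
    hξrc hξrs
end

section
/- Let G be a locally compact Hausdorff group with left Haar measure μ and let A be a G-Banach algebra. Then the closed linear span in A of the set {⟨ξ^<, ξ^>⟩_A : ξ^<, ξ^> ∈ C_c(G, A)}, where ⟨ξ^<, ξ^>⟩_A := ∫_G ξ^<(r)·(r·ξ^>(r⁻¹)) dμ(r), equals the closed linear span of the set {a·a' : a, a' ∈ A} of products of elements of A. -/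
/-!
Both closed spans are closed submodules, so it suffices to put each generating set into the
other closed span. An inner product is the integral of the continuous, compactly supported
function `r ↦ ξl r * (r·ξr r⁻¹)`, whose values are products, so it lies in the closed span
of products. Conversely, if `ψ = 1` on `(tsupport φ)⁻¹`, then `ξl = φ • a` and `ξr = ψ • b`
have inner product `∫ φ(r) a (r·b) dμ(r)`; letting `φ` run through an approximate
identity at `1` and using continuity of `r ↦ r·b`, these converge to `a * b`.
-/

open MeasureTheory

theorem Submodule.integral_mem_of_isClosed {X : Type*} [MeasurableSpace X] {μ : Measure X}
    {E : Type*} [NormedAddCommGroup E] [NormedSpace ℝ E] [CompleteSpace E]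
    (S : Submodule ℝ E) (hS : IsClosed (S : Set E)) {f : X → E} (hf : Integrable f μ)
    (hfS : ∀ x, f x ∈ S) : ∫ x, f x ∂μ ∈ S := by
  have : CompleteSpace S := hS.completeSpace_coe
  let g : X → S := fun x => ⟨f x, hfS x⟩
  have hg : Integrable g μ :=
    ⟨(Topology.IsEmbedding.subtypeVal.aestronglyMeasurable_comp_iff).1 hf.1, hf.2⟩
  have hfg : ∫ x, f x ∂μ = S.subtypeL (∫ x, g x ∂μ) := S.subtypeL.integral_comp_comm hg
  exact hfg ▸ (∫ x, g x ∂μ).2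

theorem Submodule.closure_span_subset_of_subset_closure {R M : Type*} [Semiring R]
    [TopologicalSpace R] [AddCommMonoid M] [TopologicalSpace M] [Module R M] [ContinuousAdd M]
    [ContinuousSMul R M] {s t : Set M} (h : s ⊆ closure (span R t)) :
    closure (span R s : Set M) ⊆ closure (span R t) :=
  closure_minimal ((span R t).topologicalClosure_coe ▸ span_le.2 (by simpa using h))
    isClosed_closure

section ApproximateIdentity

variable {X : Type*} [MeasurableSpace X] {μ : Measure X}
  {E : Type*} [NormedAddCommGroup E] [NormedSpace ℝ E] [CompleteSpace E]

theorem norm_integral_smul_sub_le {φ : X → ℝ} {f : X → E} {y : E} {ε : ℝ}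
    (hφ : Integrable φ μ) (hφf : Integrable (fun x => φ x • f x) μ) (hφ_nonneg : ∀ x, 0 ≤ φ x)
    (hφ_one : ∫ x, φ x ∂μ = 1) (hf : ∀ x ∈ Function.support φ, ‖f x - y‖ ≤ ε) :
    ‖∫ x, φ x • f x ∂μ - y‖ ≤ ε := by
  have hdiff : ∫ x, φ x • f x ∂μ - y = ∫ x, φ x • (f x - y) ∂μ := by
    conv_lhs => rw [← one_smul ℝ y, ← hφ_one, ← integral_smul_const,
      ← integral_sub hφf (hφ.smul_const y)]
    simp only [smul_sub]
  have hbound : ∀ x, ‖φ x • (f x - y)‖ ≤ φ x * ε := by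
    intro x
    rw [norm_smul, Real.norm_of_nonneg (hφ_nonneg x)]
    by_cases hx : φ x = 0
    · simp [hx]
    · exact mul_le_mul_of_nonneg_left (hf x hx) (hφ_nonneg x)
  calc ‖∫ x, φ x • f x ∂μ - y‖ ≤ ∫ x, φ x * ε ∂μ :=
        hdiff ▸ norm_integral_le_of_norm_le (hφ.mul_const ε) (.of_forall hbound)
    _ = ε := by rw [integral_mul_const, hφ_one, one_mul]

variable [TopologicalSpace X] [LocallyCompactSpace X] [T2Space X] [OpensMeasurableSpace X]
  [IsFiniteMeasureOnCompacts μ] [μ.IsOpenPosMeasure]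

omit [CompleteSpace E] in
theorem exists_integral_eq_one_support_subset {U : Set X} {x₀ : X} (hU : IsOpen U)
    (hx₀ : x₀ ∈ U) :
    ∃ φ : X → ℝ, Continuous φ ∧ HasCompactSupport φ ∧ (∀ x, 0 ≤ φ x) ∧
      Function.support φ ⊆ U ∧ ∫ x, φ x ∂μ = 1 := by
  obtain ⟨φ, hφ_one, hφ_zero, hφ_supp, hφ_mem⟩ :=
    exists_continuous_one_zero_of_isCompact (isCompact_singleton (x := x₀)) hU.isClosed_compl
      (Set.disjoint_singleton_left.2 (not_not_intro hx₀))
  have hc : 0 < ∫ x, φ x ∂μ :=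
    φ.continuous.integral_pos_of_hasCompactSupport_nonneg_nonzero hφ_supp
      (fun x => (hφ_mem x).1) (x := x₀) (by simp [hφ_one rfl])
  refine ⟨fun x => (∫ x, φ x ∂μ)⁻¹ * φ x, continuous_const.mul φ.continuous,
    hφ_supp.mul_left, fun x => mul_nonneg (inv_nonneg.2 hc.le) (hφ_mem x).1, ?_, ?_⟩
  · intro x hx
    by_contra hxU
    simp [hφ_zero hxU] at hx
  · rw [integral_const_mul, inv_mul_cancel₀ hc.ne']

theorem mem_closure_of_forall_integral_smul_mem {f : X → E} (hf : Continuous f) {S : Set E}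
    (hS : ∀ φ : X → ℝ, Continuous φ → HasCompactSupport φ → ∫ x, φ x • f x ∂μ ∈ S) (x₀ : X) :
    f x₀ ∈ closure S := by
  refine Metric.mem_closure_iff.2 fun ε hε => ?_
  obtain ⟨φ, hφc, hφs, hφ_nonneg, hφU, hφ_one⟩ := exists_integral_eq_one_support_subset (μ := μ)
    (isOpen_lt (hf.dist continuous_const) continuous_const)
    (show dist (f x₀) (f x₀) < ε / 2 by simpa using half_pos hε)
  refine ⟨_, hS φ hφc hφs, ?_⟩
  rw [dist_comm, dist_eq_norm]
  refine (norm_integral_smul_sub_le (hφc.integrable_of_hasCompactSupport hφs)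
    ((hφc.smul hf).integrable_of_hasCompactSupport hφs.smul_right) hφ_nonneg hφ_one
    fun x hx => ?_).trans_lt (half_lt_self hε)
  rw [← dist_eq_norm]
  exact (hφU hx).le

end ApproximateIdentity

section GBanachAlgebra

variable {G : Type*} [Group G] [TopologicalSpace G] [MeasurableSpace G] (μ : Measure G)
  {A : Type*} [NormedRing A] [NormedAlgebra ℂ A] (act : G → A → A)

def innerProducts : Set A :=
  {a | ∃ ξl ξr : G → A, Continuous ξl ∧ HasCompactSupport ξl ∧
    Continuous ξr ∧ HasCompactSupport ξr ∧ a = ∫ r, ξl r * act r (ξr r⁻¹) ∂μ}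

variable [ContinuousInv G]

theorem innerProducts_subset_closure_span_mul [CompleteSpace A] [OpensMeasurableSpace G]
    [IsFiniteMeasureOnCompacts μ] (hact : Continuous fun p : G × A => act p.1 p.2) :
    innerProducts μ act ⊆ closure (Submodule.span ℂ {x : A | ∃ a b : A, x = a * b}) := by
  rintro _ ⟨ξl, ξr, hξlc, hξls, hξrc, hξrs, rfl⟩
  set P := Submodule.span ℂ {x : A | ∃ a b : A, x = a * b}
  have hc : Continuous fun r => ξl r * act r (ξr r⁻¹) :=
    hξlc.mul (hact.comp (continuous_id.prodMk (hξrc.comp continuous_inv)))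
  rw [← P.topologicalClosure_coe]
  exact Submodule.integral_mem_of_isClosed (P.topologicalClosure.restrictScalars ℝ)
    P.isClosed_topologicalClosure (hc.integrable_of_hasCompactSupport hξls.mul_right)
    fun r => P.le_topologicalClosure (Submodule.subset_span ⟨_, _, rfl⟩)

variable [LocallyCompactSpace G] [T2Space G]

theorem integral_smul_mul_act_mem_innerProducts {φ : G → ℝ} (hφc : Continuous φ)
    (hφs : HasCompactSupport φ) (a b : A) :
    ∫ r, φ r • (a * act r b) ∂μ ∈ innerProducts μ act := by
  obtain ⟨ψ, hψ_one, -, hψs, -⟩ :=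
    exists_continuous_one_zero_of_isCompact hφs.isCompact.inv isClosed_empty
      (Set.disjoint_empty _)
  refine ⟨fun r => φ r • a, fun r => ψ r • b, hφc.smul continuous_const, hφs.smul_right,
    ψ.continuous.smul continuous_const, hψs.smul_right, ?_⟩
  congr 1
  ext r
  by_cases hr : φ r = 0
  · simp [hr]
  · have : ψ r⁻¹ = 1 := hψ_one (Set.inv_mem_inv.2 (subset_tsupport φ hr))
    simp [this]

theorem mul_mem_closure_innerProducts [CompleteSpace A] [OpensMeasurableSpace G]
    [IsFiniteMeasureOnCompacts μ] [μ.IsOpenPosMeasure] (a : A) {b : A}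
    (hb : Continuous fun r => act r b) (hb_one : act 1 b = b) : a * b ∈ closure (innerProducts μ act) := by
  simpa [hb_one] using mem_closure_of_forall_integral_smul_mem (μ := μ)
    (continuous_const.mul hb) (fun φ hφc hφs =>
      integral_smul_mul_act_mem_innerProducts μ act hφc hφs a b) 1

end GBanachAlgebra

theorem stmt_8_general
    {G : Type*} [Group G] [TopologicalSpace G] [IsTopologicalGroup G]
    [LocallyCompactSpace G] [T2Space G] [MeasurableSpace G] [BorelSpace G]
    (μ : Measure G) [μ.IsHaarMeasure]
    {A : Type*} [NormedRing A] [NormedAlgebra ℂ A] [CompleteSpace A]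
    -- `A` is a `G`-Banach algebra:
    (act : G → A → A)
    (hact_cont : Continuous fun p : G × A => act p.1 p.2)
    (hact_one : ∀ a, act 1 a = a) :
    closure (↑(Submodule.span ℂ {a : A | ∃ ξl ξr : G → A,
        Continuous ξl ∧ HasCompactSupport ξl ∧
        Continuous ξr ∧ HasCompactSupport ξr ∧
        a = ∫ r, ξl r * act r (ξr r⁻¹) ∂μ}) : Set A)
      = closure (↑(Submodule.span ℂ {x : A | ∃ a b : A, x = a * b}) : Set A) := by
  apply subset_antisymm
  · exact Submodule.closure_span_subset_of_subset_closure
      (innerProducts_subset_closure_span_mul μ act hact_cont)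
  · refine Submodule.closure_span_subset_of_subset_closure ?_
    rintro _ ⟨a, b, rfl⟩
    exact closure_mono Submodule.subset_span (mul_mem_closure_innerProducts μ act a
      (hact_cont.comp (continuous_id.prodMk continuous_const)) (hact_one b))

/-- Fullness of the `A`-valued inner product: the closed linear span
of the inner products `⟨ξ^<, ξ^>⟩_A = ∫ ξ^<(r)·(r·ξ^>(r⁻¹)) dμ(r)` over
`ξ^<, ξ^> ∈ C_c(G,A)` equals the closed linear span of the products `a·a'`. -/
theorem stmt_8
    {G : Type*} [Group G] [TopologicalSpace G] [IsTopologicalGroup G]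
    [LocallyCompactSpace G] [T2Space G] [MeasurableSpace G] [BorelSpace G]
    (μ : Measure G) [μ.IsHaarMeasure]
    {A : Type*} [NormedRing A] [NormedAlgebra ℂ A] [CompleteSpace A]
    -- `A` is a `G`-Banach algebra:
    (act : G → A → A)
    (hact_cont : Continuous fun p : G × A => act p.1 p.2)
    (hact_one : ∀ a, act 1 a = a)
    (hact_mul : ∀ g h a, act (g * h) a = act g (act h a))
    (hact_add : ∀ g a b, act g (a + b) = act g a + act g b)
    (hact_smul : ∀ g (c : ℂ) a, act g (c • a) = c • act g a)
    (hact_ring : ∀ g a b, act g (a * b) = act g a * act g b)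
    (hact_isom : ∀ g a, ‖act g a‖ = ‖a‖) :
    closure (↑(Submodule.span ℂ {a : A | ∃ ξl ξr : G → A,
        Continuous ξl ∧ HasCompactSupport ξl ∧
        Continuous ξr ∧ HasCompactSupport ξr ∧
        a = ∫ r, ξl r * act r (ξr r⁻¹) ∂μ}) : Set A)
      = closure (↑(Submodule.span ℂ {x : A | ∃ a b : A, x = a * b}) : Set A) :=
  stmt_8_general μ act hact_cont hact_one
end

section
/- Let G be a locally compact Hausdorff group with left Haar measure μ, let D be a unital Banach algebra, and let U : G → Dˣ be a group homomorphism into the invertible elements of D such that g ↦ U_g is continuous and M := sup_{g∈G} ‖U_g‖ < ∞. Let G act on D by g·d := U_g d U_g⁻¹. Define Γ : C_c(G,D) → C_c(G,D) by Γ(f)(t) := f(t)·U_t. Then: (i) Γ is a linear bijection of C_c(G,D) onto itself with inverse f ↦ (t ↦ f(t)·U_t⁻¹); (ii) ‖Γ(f)‖_{L¹} ≤ M·‖f‖_{L¹} and ‖Γ⁻¹(f)‖_{L¹} ≤ M·‖f‖_{L¹}; and (iii) Γ intertwines the twisted and untwisted convolutions: Γ(f *_κ h) = Γ(f) * Γ(h),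 where (f *_κ h)(s) := ∫_G f(r)·(r·h(r⁻¹s)) dμ(r) and (f * h)(s) := ∫_G f(r)·h(r⁻¹s) dμ(r). (This is the lemma that Γ is a continuous isomorphism of Banach algebras between L¹(G, D_κ) and L¹(G, D_τ) for an inner action.) -/
/-!
Right multiplications by `U_t` and by `U_t⁻¹ = U_{t⁻¹}` are mutually inverse and both have norm
at most `M`; this gives (i) and (ii). For (iii), `U_s` can be pulled inside the Bochner integral
without any integrability assumption, because right multiplication by a unit is a continuous
linear automorphism of `D`; the integrands then agree since `U_r⁻¹ U_s = U_{r⁻¹ s}`.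
-/

open MeasureTheory

section RightMultiplication

variable {X D : Type*} [MeasurableSpace X] {μ : Measure X}

theorem integral_norm_mul_le_mul_integral_norm [SeminormedRing D] {f v : X → D} {M : ℝ}
    (hf : Integrable (fun x => ‖f x‖) μ) (hv : ∀ x, ‖v x‖ ≤ M) :
    ∫ x, ‖f x * v x‖ ∂μ ≤ M * ∫ x, ‖f x‖ ∂μ := by
  rw [← integral_const_mul]
  refine integral_mono_of_nonneg (ae_of_all _ fun _ => norm_nonneg _) (hf.const_mul M)
    (ae_of_all _ fun x => ?_)
  calc ‖f x * v x‖ ≤ ‖f x‖ * ‖v x‖ := norm_mul_le _ _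
    _ ≤ ‖f x‖ * M := by gcongr; exact hv x
    _ = M * ‖f x‖ := mul_comm _ _

variable [NormedRing D] [NormedAlgebra ℝ D]

noncomputable def ContinuousLinearEquiv.mulRightUnit (u : Dˣ) : D ≃L[ℝ] D :=
  .equivOfInverse ((ContinuousLinearMap.mul ℝ D).flip u) ((ContinuousLinearMap.mul ℝ D).flip ↑u⁻¹)
    (fun x => Units.mul_inv_cancel_right x u) (fun x => Units.inv_mul_cancel_right x u)

theorem integral_mul_units (φ : X → D) (u : Dˣ) :
    (∫ x, φ x ∂μ) * u = ∫ x, φ x * u ∂μ :=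
  ((ContinuousLinearEquiv.mulRightUnit u).integral_comp_comm φ).symm

end RightMultiplication

section InnerAction

variable {G R : Type*} [Group G]

theorem norm_coe_inv_apply_le [Monoid R] [Norm R] (U : G →* Rˣ) {M : ℝ}
    (hM : ∀ g, ‖(U g : R)‖ ≤ M) (g : G) : ‖(((U g)⁻¹ : Rˣ) : R)‖ ≤ M := by
  simpa only [map_inv] using hM g⁻¹

theorem mul_conj_mul_eq_mul_mul_apply_inv_mul [Monoid R] (U : G →* Rˣ) (a b : R) (r s : G) :
    a * (U r * b * ((U r)⁻¹ : Rˣ)) * U s = a * U r * (b * U (r⁻¹ * s)) := by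
  simp only [map_mul, map_inv, Units.val_mul, mul_assoc]

end InnerAction

theorem stmt_11_general
    {G : Type*} [Group G] [TopologicalSpace G]
    [MeasurableSpace G] [BorelSpace G]
    (μ : Measure G) [μ.IsHaarMeasure]
    {D : Type*} [NormedRing D] [NormedAlgebra ℂ D]
    -- `U : G → Dˣ` a continuous, globally bounded group homomorphism:
    (U : G →* Dˣ)
    (hUcont : Continuous fun g : G => ((U g : Dˣ) : D))
    (M : ℝ) (hM : ∀ g : G, ‖((U g : Dˣ) : D)‖ ≤ M)
    -- `f, h ∈ C_c(G, D)`: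
    (f h : G → D)
    (hfc : Continuous f) (hfs : HasCompactSupport f) :
    -- (i) `Γ` is a linear bijection of `C_c(G,D)` with inverse `f ↦ (t ↦ f(t)·U_t⁻¹)`:
    Continuous (fun t : G => f t * ((U t : Dˣ) : D)) ∧
    HasCompactSupport (fun t : G => f t * ((U t : Dˣ) : D)) ∧
    ((fun t : G => (f t * ((U t : Dˣ) : D)) * (((U t)⁻¹ : Dˣ) : D)) = f) ∧
    ((fun t : G => (f t * (((U t)⁻¹ : Dˣ) : D)) * ((U t : Dˣ) : D)) = f) ∧
    ((fun t : G => (f + h) t * ((U t : Dˣ) : D))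
      = (fun t : G => f t * ((U t : Dˣ) : D)) + fun t : G => h t * ((U t : Dˣ) : D)) ∧
    (∀ c : ℂ, (fun t : G => (c • f) t * ((U t : Dˣ) : D))
      = c • fun t : G => f t * ((U t : Dˣ) : D)) ∧
    -- (ii) `Γ` and `Γ⁻¹` are bounded by `M` for `‖·‖_{L¹}`:
    (∫ t, ‖f t * ((U t : Dˣ) : D)‖ ∂μ) ≤ M * ∫ t, ‖f t‖ ∂μ ∧
    (∫ t, ‖f t * (((U t)⁻¹ : Dˣ) : D)‖ ∂μ) ≤ M * ∫ t, ‖f t‖ ∂μ ∧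
    -- (iii) `Γ` intertwines the twisted and the untwisted convolutions:
    ((fun s : G =>
        (∫ r, f r * (((U r : Dˣ) : D) * h (r⁻¹ * s) * (((U r)⁻¹ : Dˣ) : D)) ∂μ)
          * ((U s : Dˣ) : D))
      = fun s : G =>
        ∫ r, (f r * ((U r : Dˣ) : D)) * (h (r⁻¹ * s) * ((U (r⁻¹ * s) : Dˣ) : D)) ∂μ) := by
  have hf : Integrable (fun t => ‖f t‖) μ := hfc.norm.integrable_of_hasCompactSupport hfs.norm
  refine ⟨hfc.mul hUcont, hfs.mul_right, ?_, ?_, ?_, ?_,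
    integral_norm_mul_le_mul_integral_norm hf hM,
    integral_norm_mul_le_mul_integral_norm hf (norm_coe_inv_apply_le U hM), ?_⟩
  · funext t; exact Units.mul_inv_cancel_right _ _
  · funext t; exact Units.inv_mul_cancel_right _ _
  · funext t; exact add_mul _ _ _
  · intro c; funext t; exact smul_mul_assoc _ _ _
  · funext s
    simp only [integral_mul_units, mul_conj_mul_eq_mul_mul_apply_inv_mul]

/-- For an inner action `g·d = U_g d U_g⁻¹` of `G` on a unital
Banach algebra `D`, the map `Γ(f)(t) := f(t)·U_t` is a continuous isomorphism of
Banach algebras between `L¹(G, D_κ)` (twisted convolution) and `L¹(G, D_τ)`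
(untwisted convolution). -/
theorem stmt_11
    {G : Type*} [Group G] [TopologicalSpace G] [IsTopologicalGroup G]
    [LocallyCompactSpace G] [T2Space G] [MeasurableSpace G] [BorelSpace G]
    (μ : Measure G) [μ.IsHaarMeasure]
    {D : Type*} [NormedRing D] [NormedAlgebra ℂ D] [CompleteSpace D]
    -- `U : G → Dˣ` a continuous, globally bounded group homomorphism:
    (U : G →* Dˣ)
    (hUcont : Continuous fun g : G => ((U g : Dˣ) : D))
    (M : ℝ) (hM : ∀ g : G, ‖((U g : Dˣ) : D)‖ ≤ M)
    -- `f, h ∈ C_c(G, D)`: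
    (f h : G → D)
    (hfc : Continuous f) (hfs : HasCompactSupport f)
    (hhc : Continuous h) (hhs : HasCompactSupport h) :
    -- (i) `Γ` is a linear bijection of `C_c(G,D)` with inverse `f ↦ (t ↦ f(t)·U_t⁻¹)`:
    Continuous (fun t : G => f t * ((U t : Dˣ) : D)) ∧
    HasCompactSupport (fun t : G => f t * ((U t : Dˣ) : D)) ∧
    ((fun t : G => (f t * ((U t : Dˣ) : D)) * (((U t)⁻¹ : Dˣ) : D)) = f) ∧
    ((fun t : G => (f t * (((U t)⁻¹ : Dˣ) : D)) * ((U t : Dˣ) : D)) = f) ∧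
    ((fun t : G => (f + h) t * ((U t : Dˣ) : D))
      = (fun t : G => f t * ((U t : Dˣ) : D)) + fun t : G => h t * ((U t : Dˣ) : D)) ∧
    (∀ c : ℂ, (fun t : G => (c • f) t * ((U t : Dˣ) : D))
      = c • fun t : G => f t * ((U t : Dˣ) : D)) ∧
    -- (ii) `Γ` and `Γ⁻¹` are bounded by `M` for `‖·‖_{L¹}`:
    (∫ t, ‖f t * ((U t : Dˣ) : D)‖ ∂μ) ≤ M * ∫ t, ‖f t‖ ∂μ ∧
    (∫ t, ‖f t * (((U t)⁻¹ : Dˣ) : D)‖ ∂μ) ≤ M * ∫ t, ‖f t‖ ∂μ ∧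
    -- (iii) `Γ` intertwines the twisted and the untwisted convolutions:
    ((fun s : G =>
        (∫ r, f r * (((U r : Dˣ) : D) * h (r⁻¹ * s) * (((U r)⁻¹ : Dˣ) : D)) ∂μ)
          * ((U s : Dˣ) : D))
      = fun s : G =>
        ∫ r, (f r * ((U r : Dˣ) : D)) * (h (r⁻¹ * s) * ((U (r⁻¹ * s) : Dˣ) : D)) ∂μ) :=
  stmt_11_general μ U hUcont M hM f h hfc hfs
end

section
/- Let G be a discrete group and let A be a G-Banach algebra. Define φ : ℓ¹(G,A) → ℓ¹(G, ℓ¹(G,A)) by φ(f)(t)(s) := f(t) if s = t and φ(f)(t)(s) := 0 otherwise. Then: (i) φ is isometric: Σ_{t∈G} ‖φ(f)(t)‖₁ = ‖f‖₁; (ii) φ is an algebra homomorphism from ℓ¹(G,A) with the twisted convolution (f*h)(s) := Σ_r f(r)·(r·h(r⁻¹s)) to ℓ¹(G, ℓ¹(G,A)) with the outer convolution (F⊛H)(s) := Σ_r F(r)*H(r⁻¹s) (values multiplied by the twisted convolution of ℓ¹(G,A), trivial G-action on values); and (iii) ε_{ℓ¹(G,A)} ∘ φ = id_{ℓ¹(G,A)},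 i.e. Σ_{t∈G} φ(f)(t) = f for every f ∈ ℓ¹(G,A). -/
/-!
`φ(f)(t)` is the point mass `δ_t (f t)`. Isometry and `ε ∘ φ = id` are then sums with a single
nonzero term, and multiplicativity reduces to the product rule `δ_r a * δ_u b = δ_{ru} (a · r•b)`
of the twisted convolution.
-/

/-- The twisted convolution on `ℓ¹(G, A)` for a discrete group `G`. -/
noncomputable def tconv {G A : Type*} [Group G] [NormedRing A]
    (act : G → A → A) (f h : G → A) : G → A :=
  fun s => ∑' r, f r * act r (h (r⁻¹ * s))

/-- The diagonal embedding `φ : ℓ¹(G,A) → ℓ¹(G, ℓ¹(G,A))`,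
`φ(f)(t)(s) = f(t)` if `s = t` and `0` otherwise. -/
def phi {G A : Type*} [DecidableEq G] [Zero A] (f : G → A) : G → G → A :=
  fun t s => if s = t then f t else 0

section

variable {G A : Type*}

theorem phi_eq_single [DecidableEq G] [Zero A] (f : G → A) (t : G) :
    phi f t = Pi.single t (f t) :=
  funext fun s => (Pi.single_apply t (f t) s).symm

theorem tsum_norm_single [DecidableEq G] [SeminormedAddCommGroup A]
    (t : G) (a : A) : ∑' s, ‖(Pi.single t a : G → A) s‖ = ‖a‖ := by
  simp_rw [Pi.apply_single (fun _ => norm) (fun _ => norm_zero)]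
  exact tsum_pi_single t ‖a‖

theorem tsum_phi_apply [DecidableEq G] [AddCommMonoid A] [TopologicalSpace A]
    (f : G → A) (s : G) : ∑' t, phi f t s = f s :=
  (tsum_eq_single s fun _ ht => if_neg (Ne.symm ht)).trans (if_pos rfl)

theorem tconv_single_single [Group G] [DecidableEq G] [NormedRing A]
    (act : G → A → A) {r : G} (hact_zero : act r 0 = 0) (u : G) (a b : A) :
    tconv act (Pi.single r a) (Pi.single u b) = Pi.single (r * u) (a * act r b) := by
  funext s
  unfold tconv
  rw [tsum_eq_single r fun q hq => by rw [Pi.single_eq_of_ne hq, zero_mul], Pi.single_eq_same]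
  by_cases hs : s = r * u
  · rw [hs, inv_mul_cancel_left, Pi.single_eq_same, Pi.single_eq_same]
  · have hs' : r⁻¹ * s ≠ u := fun h => hs (eq_mul_of_inv_mul_eq h)
    rw [Pi.single_eq_of_ne hs', Pi.single_eq_of_ne hs, hact_zero, mul_zero]

theorem tsum_single_apply [DecidableEq G] [AddCommMonoid A] [TopologicalSpace A]
    (t : G) (x : G → A) (s : G) :
    ∑' r, (Pi.single t (x r) : G → A) s = (Pi.single t (∑' r, x r) : G → A) s := by
  by_cases hs : s = t
  · subst hs
    simp only [Pi.single_eq_same]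
  · simp only [Pi.single_eq_of_ne hs, tsum_zero]

end

theorem stmt_15_general
    {G : Type*} [Group G] [DecidableEq G]
    {A : Type*} [NormedRing A]
    -- `A` is a `G`-Banach algebra:
    (act : G → A → A)
    (hact_add : ∀ g a b, act g (a + b) = act g a + act g b)
    -- `f, h ∈ ℓ¹(G, A)`:
    (f h : G → A) :
    -- (i) `φ` is isometric:
    (∑' t : G, ∑' s : G, ‖phi f t s‖) = (∑' s : G, ‖f s‖) ∧
    -- (ii) `φ` is an algebra homomorphism into the outer convolution:
    (∀ t s : G,
      phi (tconv act f h) t s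
        = ∑' r : G, (tconv act (phi f r) (phi h (r⁻¹ * t))) s) ∧
    -- (iii) `ε_{ℓ¹(G,A)} ∘ φ = id`:
    (∀ s : G, (∑' t : G, phi f t s) = f s) := by
  have hact_zero : ∀ g, act g 0 = 0 := fun g => (AddMonoidHom.mk' (act g) (hact_add g)).map_zero
  refine ⟨?_, fun t s => ?_, tsum_phi_apply f⟩
  · simp only [phi_eq_single, tsum_norm_single]
  · simp only [phi_eq_single, tconv_single_single act (hact_zero _), mul_inv_cancel_left,
      tsum_single_apply]
    rfl

/-- The map `φ : ℓ¹(G,A) → ℓ¹(G,ℓ¹(G,A))`, `φ(f)(t) = f(t)·δ_t`, is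
an isometric algebra homomorphism from the twisted convolution to the outer
(untwisted) convolution with values multiplied by the twisted convolution of
`ℓ¹(G,A)`, and `ε_{ℓ¹(G,A)} ∘ φ = id`. -/
theorem stmt_15
    {G : Type*} [Group G] [DecidableEq G]
    {A : Type*} [NormedRing A] [NormedAlgebra ℂ A] [CompleteSpace A]
    -- `A` is a `G`-Banach algebra:
    (act : G → A → A)
    (hact_one : ∀ a, act 1 a = a)
    (hact_mul : ∀ g h a, act (g * h) a = act g (act h a))
    (hact_add : ∀ g a b, act g (a + b) = act g a + act g b)
    (hact_smul : ∀ g (c : ℂ) a, act g (c • a) = c • act g a)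
    (hact_ring : ∀ g a b, act g (a * b) = act g a * act g b)
    (hact_isom : ∀ g a, ‖act g a‖ = ‖a‖)
    -- `f, h ∈ ℓ¹(G, A)`:
    (f h : G → A)
    (hf : Summable fun s => ‖f s‖) (hh : Summable fun s => ‖h s‖) :
    -- (i) `φ` is isometric:
    (∑' t : G, ∑' s : G, ‖phi f t s‖) = (∑' s : G, ‖f s‖) ∧
    -- (ii) `φ` is an algebra homomorphism into the outer convolution:
    (∀ t s : G,
      phi (tconv act f h) t s
        = ∑' r : G, (tconv act (phi f r) (phi h (r⁻¹ * t))) s) ∧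
    -- (iii) `ε_{ℓ¹(G,A)} ∘ φ = id`:
    (∀ s : G, (∑' t : G, phi f t s) = f s) :=
  stmt_15_general act hact_add f h
end

section
/- Let G be a locally compact Hausdorff group with left Haar measure μ acting continuously and properly on a locally compact Hausdorff space X, and let c : X → [0,∞) be a cut-off function, i.e. c is continuous, ∫_G c(t⁻¹x) dμ(t) = 1 for every x ∈ X, and the restriction of c to every G-compact subset of X has compact support. Then for every f ∈ C_c(X): (i) for each t ∈ G the function (t·c)·f : x ↦ c(t⁻¹x)·f(x) belongs to C_c(X) ⊆ C₀(X); (ii) the map t ↦ (t·c)·f is a continuous compactly supported map from G to the Banach space C₀(X); and (iii) ∫_G (t·c)·f dμ(t) = f, the integral being a Bochner integral in C₀(X). -/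
open MeasureTheory
open scoped ZeroAtInfty

/-!
Every `(t·c)·f` is supported in the compact set `K = tsupport f`, and on functions supported
in `K` the sup norm of `C₀(X)` is that of `C(K)`; so joint continuity of
`(t, x) ↦ c(t⁻¹x) f(x)` gives continuity of `t ↦ (t·c)·f`. If `(t·c)·f ≠ 0`, then
`t⁻¹x ∈ L = closure (G·K ∩ supp c)` for some `x ∈ K`; `L` is compact because `c` is a cut-off
function, and properness makes `{t | t⁻¹K ∩ L ≠ ∅}` compact. Evaluation at a point is a
continuous linear functional on `C₀(X)`, hence commutes with the Bochner integral, and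
`∫ c(t⁻¹x) dμ(t) = 1`.
-/

open Function
open scoped CompactlySupported

namespace ZeroAtInftyContinuousMap

section Integral

variable {X E : Type*} [TopologicalSpace X] [NormedAddCommGroup E]

variable (𝕜 : Type*) [NormedField 𝕜] [NormedSpace 𝕜 E] in
noncomputable def evalCLM (x : X) : C₀(X, E) →L[𝕜] E :=
  LinearMap.mkContinuous
    { toFun := fun φ => φ x
      map_add' := fun _ _ => rfl
      map_smul' := fun _ _ => rfl } 1
    fun φ => by simpa [← norm_toBCF_eq_norm] using φ.toBCF.norm_coe_le_norm x

theorem integral_apply [NormedSpace ℝ E] [CompleteSpace E] {T : Type*} [MeasurableSpace T]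
    {μ : Measure T} {F : T → C₀(X, E)} (hF : Integrable F μ) (x : X) :
    (∫ t, F t ∂μ) x = ∫ t, F t x ∂μ :=
  calc (∫ t, F t ∂μ) x = evalCLM ℝ x (∫ t, F t ∂μ) := rfl
    _ = ∫ t, evalCLM ℝ x (F t) ∂μ := (ContinuousLinearMap.integral_comp_comm _ hF).symm
    _ = ∫ t, F t x ∂μ := rfl

end Integral

section Continuity

variable {T X E : Type*} [TopologicalSpace T] [TopologicalSpace X] [PseudoMetricSpace E] [Zero E]

theorem dist_le_dist_restrict {K : Set X} [CompactSpace K] {φ ψ : C₀(X, E)}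
    (hφ : support φ ⊆ K) (hψ : support ψ ⊆ K) :
    dist φ ψ ≤ dist ((φ : C(X, E)).restrict K) ((ψ : C(X, E)).restrict K) := by
  rw [← dist_toBCF_eq_dist]
  refine (BoundedContinuousFunction.dist_le dist_nonneg).2 fun x => ?_
  by_cases hx : x ∈ K
  · exact ContinuousMap.dist_apply_le_dist (f := (φ : C(X, E)).restrict K)
      (g := (ψ : C(X, E)).restrict K) ⟨x, hx⟩
  · have hφx : φ x = 0 := notMem_support.1 fun h => hx (hφ h)
    have hψx : ψ x = 0 := notMem_support.1 fun h => hx (hψ h)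
    simp [hφx, hψx]

theorem continuous_of_continuous_uncurry_of_support_subset (F : T → C₀(X, E))
    (hF : Continuous (uncurry fun t x => F t x)) {K : Set X} (hK : IsCompact K)
    (hFK : ∀ t, support (F t) ⊆ K) : Continuous F := by
  have := isCompact_iff_compactSpace.1 hK
  have hrestrict : Continuous fun t => (F t : C(X, E)).restrict K :=
    (ContinuousMap.continuous_restrict K).comp
      (ContinuousMap.continuous_of_continuous_uncurry (fun t => (F t : C(X, E))) hF)
  refine continuous_iff_continuousAt.2 fun t₀ => Metric.tendsto_nhds.2 fun ε hε => ?_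
  filter_upwards [Metric.tendsto_nhds.1 (hrestrict.tendsto t₀) ε hε] with t ht
  exact (dist_le_dist_restrict (hFK t) (hFK t₀)).trans_lt ht

end Continuity

end ZeroAtInftyContinuousMap

theorem ProperSMul.isCompact_setOf_exists_inv_smul_mem {G X : Type*} [Group G]
    [TopologicalSpace G] [ContinuousInv G] [TopologicalSpace X] [MulAction G X]
    [ProperSMul G X] {K L : Set X} (hK : IsCompact K) (hL : IsCompact L) :
    IsCompact {t : G | ∃ x ∈ K, t⁻¹ • x ∈ L} := by
  convert (ProperSMul.isCompact_setOfPred_inter_nonempty (G := G) hK hL).inv using 1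
  ext t
  simp [Set.Nonempty, Set.mem_smul_set]

section CutoffTranslate

variable {G X : Type*} [Group G] [TopologicalSpace X] [MulAction G X]

noncomputable def translateMul [ContinuousConstSMul G X] (c : C(X, ℝ)) (f : C_c(X, ℂ)) (t : G) :
    C_c(X, ℂ) where
  toFun x := c (t⁻¹ • x) * f x
  continuous_toFun := by fun_prop
  hasCompactSupport' := f.hasCompactSupport.mul_left

theorem support_translateMul_subset [ContinuousConstSMul G X] (c : C(X, ℝ)) (f : C_c(X, ℂ))
    (t : G) : support (translateMul c f t) ⊆ tsupport f :=
  fun _ hx => subset_tsupport f (right_ne_zero_of_mul hx)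

variable [TopologicalSpace G] [ContinuousInv G]

theorem continuous_translateMul [ContinuousSMul G X] (c : C(X, ℝ)) (f : C_c(X, ℂ)) :
    Continuous fun t : G => (translateMul c f t : C₀(X, ℂ)) :=
  ZeroAtInftyContinuousMap.continuous_of_continuous_uncurry_of_support_subset _
    (show Continuous fun p : G × X => (c (p.1⁻¹ • p.2) : ℂ) * f p.2 by fun_prop)
    f.hasCompactSupport (support_translateMul_subset c f)

variable [R1Space G] [ProperSMul G X]

theorem hasCompactSupport_translateMul (c : C(X, ℝ))
    (hc : ∀ K : Set X, IsCompact K →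
      IsCompact (closure ((⋃ g : G, (fun x => g • x) '' K) ∩ support c)))
    (f : C_c(X, ℂ)) :
    HasCompactSupport fun t : G => (translateMul c f t : C₀(X, ℂ)) := by
  set K := tsupport f
  refine HasCompactSupport.intro
    (ProperSMul.isCompact_setOf_exists_inv_smul_mem (G := G) f.hasCompactSupport
      (hc K f.hasCompactSupport)) fun t ht => ?_
  ext x
  by_contra hx
  replace hx : c (t⁻¹ • x) * f x ≠ 0 := hx
  have hxK : x ∈ K := subset_tsupport f (right_ne_zero_of_mul hx)
  exact ht ⟨x, hxK, subset_closure
    ⟨Set.mem_iUnion.2 ⟨t⁻¹, x, hxK, rfl⟩, by exact_mod_cast left_ne_zero_of_mul hx⟩⟩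

theorem integral_translateMul [MeasurableSpace G] [BorelSpace G] (μ : Measure G)
    [IsFiniteMeasureOnCompacts μ] (c : C(X, ℝ))
    (hc : ∀ K : Set X, IsCompact K →
      IsCompact (closure ((⋃ g : G, (fun x => g • x) '' K) ∩ support c)))
    (hc_int : ∀ x : X, ∫ t : G, c (t⁻¹ • x) ∂μ = 1)
    (f : C_c(X, ℂ)) : ∫ t, (translateMul c f t : C₀(X, ℂ)) ∂μ = f := by
  have hint : Integrable (fun t => (translateMul c f t : C₀(X, ℂ))) μ :=
    (continuous_translateMul c f).integrable_of_hasCompactSupport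
      (hasCompactSupport_translateMul c hc f)
  ext x
  rw [ZeroAtInftyContinuousMap.integral_apply hint]
  show ∫ t, (c (t⁻¹ • x) : ℂ) * f x ∂μ = f x
  rw [integral_mul_const, integral_complex_ofReal, hc_int, Complex.ofReal_one, one_mul]

end CutoffTranslate

theorem stmt_18_general
    {G : Type*} [Group G] [TopologicalSpace G] [IsTopologicalGroup G]
    [MeasurableSpace G] [BorelSpace G]
    (μ : Measure G) [μ.IsHaarMeasure]
    {X : Type*} [TopologicalSpace X]
    [MulAction G X]
    -- the action is continuous and proper:
    (hact_proper : IsProperMap fun p : G × X => (p.1 • p.2, p.2))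
    -- `c` is a cut-off function:
    (c : X → ℝ) (hc_cont : Continuous c)
    (hc_int : ∀ x : X, ∫ t : G, c (t⁻¹ • x) ∂μ = 1)
    (hc_supp : ∀ K : Set X, IsCompact K →
      IsCompact (closure ((⋃ g : G, (fun x => g • x) '' K) ∩ Function.support c)))
    -- `f ∈ C_c(X)`:
    (f : X → ℂ) (hf_cont : Continuous f) (hf_supp : HasCompactSupport f) :
    -- (i) each `(t·c)·f` is in `C_c(X)`:
    (∀ t : G, Continuous (fun x : X => (c (t⁻¹ • x) : ℂ) * f x) ∧
      HasCompactSupport (fun x : X => (c (t⁻¹ • x) : ℂ) * f x)) ∧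
    -- (ii), (iii): `t ↦ (t·c)·f` is a continuous compactly supported map `G → C₀(X)`
    -- whose Bochner integral is `f`:
    (∃ F : G → C₀(X, ℂ),
      (∀ (t : G) (x : X), F t x = (c (t⁻¹ • x) : ℂ) * f x) ∧
      Continuous F ∧ HasCompactSupport F ∧
      ∃ f₀ : C₀(X, ℂ), (∀ x : X, f₀ x = f x) ∧ (∫ t, F t ∂μ) = f₀) := by
  have : ProperSMul G X := ⟨hact_proper⟩
  let c' : C(X, ℝ) := ⟨c, hc_cont⟩
  let f' : C_c(X, ℂ) := ⟨⟨f, hf_cont⟩, hf_supp⟩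
  refine ⟨fun t => ⟨(translateMul c' f' t).continuous,
      (translateMul c' f' t).hasCompactSupport⟩,
    fun t => translateMul c' f' t, fun _ _ => rfl, continuous_translateMul c' f',
    hasCompactSupport_translateMul c' hc_supp f', f', fun _ => rfl,
    integral_translateMul μ c' hc_supp hc_int f'⟩

/-- Let `G` act properly on `X` and let `c` be a cut-off function.
For every `f ∈ C_c(X)`: (i) each `(t·c)·f : x ↦ c(t⁻¹x)f(x)` lies in `C_c(X) ⊆ C₀(X)`;
(ii) `t ↦ (t·c)·f` is a continuous compactly supported map from `G` to the Banach
space `C₀(X)`; and (iii) `∫_G (t·c)·f dμ(t) = f` as a Bochner integral in `C₀(X)`. -/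
theorem stmt_18
    {G : Type*} [Group G] [TopologicalSpace G] [IsTopologicalGroup G]
    [LocallyCompactSpace G] [T2Space G] [MeasurableSpace G] [BorelSpace G]
    (μ : Measure G) [μ.IsHaarMeasure]
    {X : Type*} [TopologicalSpace X] [LocallyCompactSpace X] [T2Space X]
    [MulAction G X]
    -- the action is continuous and proper:
    (hact_cont : Continuous fun p : G × X => p.1 • p.2)
    (hact_proper : IsProperMap fun p : G × X => (p.1 • p.2, p.2))
    -- `c` is a cut-off function:
    (c : X → ℝ) (hc_cont : Continuous c) (hc_nonneg : ∀ x, 0 ≤ c x)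
    (hc_int : ∀ x : X, ∫ t : G, c (t⁻¹ • x) ∂μ = 1)
    (hc_supp : ∀ K : Set X, IsCompact K →
      IsCompact (closure ((⋃ g : G, (fun x => g • x) '' K) ∩ Function.support c)))
    -- `f ∈ C_c(X)`:
    (f : X → ℂ) (hf_cont : Continuous f) (hf_supp : HasCompactSupport f) :
    -- (i) each `(t·c)·f` is in `C_c(X)`:
    (∀ t : G, Continuous (fun x : X => (c (t⁻¹ • x) : ℂ) * f x) ∧
      HasCompactSupport (fun x : X => (c (t⁻¹ • x) : ℂ) * f x)) ∧
    -- (ii), (iii): `t ↦ (t·c)·f` is a continuous compactly supported map `G → C₀(X)`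
    -- whose Bochner integral is `f`:
    (∃ F : G → C₀(X, ℂ),
      (∀ (t : G) (x : X), F t x = (c (t⁻¹ • x) : ℂ) * f x) ∧
      Continuous F ∧ HasCompactSupport F ∧
      ∃ f₀ : C₀(X, ℂ), (∀ x : X, f₀ x = f x) ∧ (∫ t, F t ∂μ) = f₀) :=
  stmt_18_general μ hact_proper c hc_cont hc_int hc_supp f hf_cont hf_supp
end
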